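/- arXiv:2010.00250 — 6 statements merged into one kernel-verified Lean document; each statement's English description precedes it below -/
import Mathlib

section
/- Let $1\le q<p<\infty$. If $w\in A(\mathcal M^{q}(\varphi))$ then $w\in A(\mathcal M^{p}(\varphi))$; more precisely, $\frac{\|\chi_B\|_{\mathcal M^{p}(\varphi,w)}\|\chi_B\|_{\mathcal M^{p}(\varphi,w)'}}{|B|} \le \left(\frac{\|\chi_B\|_{\mathcal M^{q}(\varphi,w)}\|\chi_B\|_{\mathcal M^{q}(\varphi,w)'}}{|B|}\right)^{q/p}$ for every ball $B$. -/
open MeasureTheory Metric ENNReal Set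

noncomputable section

abbrev En (n : ℕ) := EuclideanSpace ℝ (Fin n)

/-- Weighted Morrey "norm": sup over all balls of `((φ(B))⁻¹ ∫_B f^p w)^{1/p}`. -/
def morreyNorm (n : ℕ) (p : ℝ) (φ : En n → ℝ → ℝ≥0∞) (w f : En n → ℝ≥0∞) : ℝ≥0∞ :=
  ⨆ (c : En n) (r : ℝ) (_ : 0 < r),
    ((∫⁻ x in ball c r, f x ^ p * w x) / φ c r) ^ (1 / p)

/-- Köthe dual norm of the weighted Morrey space. -/
def kotheNorm (n : ℕ) (p : ℝ) (φ : En n → ℝ → ℝ≥0∞) (w g : En n → ℝ≥0∞) : ℝ≥0∞ :=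
  ⨆ (f : En n → ℝ≥0∞) (_ : morreyNorm n p φ w f ≤ 1), ∫⁻ x, f x * g x

/-- Characteristic function of the ball `B(c,r)`, with values in `ℝ≥0∞`. -/
def chiB {n : ℕ} (c : En n) (r : ℝ) : En n → ℝ≥0∞ := (ball c r).indicator 1
/-!
Since `χ_B ^ s = χ_B` for `s > 0`, and `‖f ^ s‖_{M^p} = ‖f‖_{M^{sp}} ^ s`, the Morrey norm of
`χ_B` at exponent `p` is its norm at exponent `q` raised to the power `q/p`. For the dual norm, if
`‖f‖_{M^p} ≤ 1` then `‖f ^ {p/q}‖_{M^q} ≤ 1`, so Hölder's inequality with exponent `p/q` on `B` gives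
`∫_B f ≤ (∫_B f ^ {p/q}) ^ {q/p} |B| ^ {1 - q/p} ≤ ‖χ_B‖_{(M^q)'} ^ {q/p} |B| ^ {1 - q/p}`.
Multiplying the two bounds, the powers of `|B|` combine to `|B| ^ {q/p}`.
-/

theorem ENNReal.lintegral_le_Lp_mul_measure_univ_rpow {α : Type*} [MeasurableSpace α]
    (μ : Measure α) (f : α → ℝ≥0∞) {r : ℝ} (hr : 1 ≤ r) :
    ∫⁻ x, f x ∂μ ≤ (∫⁻ x, f x ^ r ∂μ) ^ (1 / r) * μ univ ^ (1 - 1 / r) := by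
  obtain ⟨g, hg, hgf, hfg⟩ := exists_measurable_le_lintegral_eq μ f
  have hHolder :=
    eLpNorm'_le_eLpNorm'_mul_rpow_measure_univ (μ := μ) one_pos hr hg.aestronglyMeasurable
  simp only [eLpNorm'_eq_lintegral_enorm, enorm_eq_self, rpow_one, div_one] at hHolder
  calc ∫⁻ x, f x ∂μ = ∫⁻ x, g x ∂μ := hfg
    _ ≤ (∫⁻ x, g x ^ r ∂μ) ^ (1 / r) * μ univ ^ (1 - 1 / r) := hHolder
    _ ≤ (∫⁻ x, f x ^ r ∂μ) ^ (1 / r) * μ univ ^ (1 - 1 / r) := by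
      gcongr with x
      exact hgf x

theorem ENNReal.rpow_mul_mul_rpow_div_self (a b : ℝ≥0∞) {V : ℝ≥0∞} (hV0 : V ≠ 0) (hV : V ≠ ∞)
    {t : ℝ} (ht : 0 ≤ t) :
    a ^ t * (b ^ t * V ^ (1 - t)) / V = (a * b / V) ^ t := by
  have hVt : V ^ t * V ^ (1 - t) = V := by rw [← rpow_add _ _ hV0 hV, add_sub_cancel, rpow_one]
  rw [div_rpow_of_nonneg _ _ ht, mul_rpow_of_nonneg _ _ ht, ← mul_assoc]
  nth_rw 2 [← hVt]
  exact ENNReal.mul_div_mul_right _ _ (rpow_pos (pos_iff_ne_zero.2 hV0) hV).ne'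
    (rpow_ne_top_of_nonneg' (pos_iff_ne_zero.2 hV0) hV)

theorem chiB_rpow {n : ℕ} (c : En n) (r : ℝ) {s : ℝ} (hs : 0 < s) :
    (fun x => chiB c r x ^ s) = chiB c r := by
  funext x
  by_cases hx : x ∈ ball c r <;> simp [chiB, hx, zero_rpow_of_pos hs]

theorem lintegral_mul_chiB {n : ℕ} (c : En n) (r : ℝ) (f : En n → ℝ≥0∞) :
    ∫⁻ x, f x * chiB c r x = ∫⁻ x in ball c r, f x := by
  rw [← lintegral_indicator measurableSet_ball]
  congr 1 with x
  by_cases hx : x ∈ ball c r <;> simp [chiB, hx]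

section Morrey

variable {n : ℕ} {φ : En n → ℝ → ℝ≥0∞} {w : En n → ℝ≥0∞} {p q : ℝ}

theorem morreyNorm_rpow (f : En n → ℝ≥0∞) {s : ℝ} (hp : 0 < p) (hs : 0 < s) :
    morreyNorm n p φ w (fun x => f x ^ s) = morreyNorm n (s * p) φ w f ^ s := by
  have hterm (c : En n) (r : ℝ) :
      ((∫⁻ x in ball c r, (f x ^ s) ^ p * w x) / φ c r) ^ (1 / p)
        = (((∫⁻ x in ball c r, f x ^ (s * p) * w x) / φ c r) ^ (1 / (s * p))) ^ s := by
    simp_rw [← rpow_mul]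
    congr 2
    field_simp
  simp only [morreyNorm, hterm]
  conv_rhs => rw [← orderIsoRpow_apply s hs]
  simp only [map_iSup, orderIsoRpow_apply]

theorem morreyNorm_chiB (c : En n) (r : ℝ) (hq : 0 < q) (hp : 0 < p) :
    morreyNorm n p φ w (chiB c r) = morreyNorm n q φ w (chiB c r) ^ (q / p) := by
  calc morreyNorm n p φ w (chiB c r)
      = morreyNorm n p φ w (fun x => chiB c r x ^ (q / p)) := by rw [chiB_rpow c r (div_pos hq hp)]
    _ = morreyNorm n q φ w (chiB c r) ^ (q / p) := by
      rw [morreyNorm_rpow _ hp (div_pos hq hp), div_mul_cancel₀ _ hp.ne']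

theorem lintegral_rpow_mul_le_kotheNorm {f : En n → ℝ≥0∞} (g : En n → ℝ≥0∞) (hq : 0 < q)
    (hp : 0 < p) (hf : morreyNorm n p φ w f ≤ 1) :
    ∫⁻ x, f x ^ (p / q) * g x ≤ kotheNorm n q φ w g := by
  refine le_iSup₂_of_le (fun x => f x ^ (p / q)) ?_ le_rfl
  rw [morreyNorm_rpow f hq (div_pos hp hq), div_mul_cancel₀ _ hq.ne']
  exact rpow_le_one hf (div_pos hp hq).le

theorem kotheNorm_chiB_le (c : En n) (r : ℝ) (hq : 0 < q) (hqp : q ≤ p) :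
    kotheNorm n p φ w (chiB c r)
      ≤ kotheNorm n q φ w (chiB c r) ^ (q / p) * volume (ball c r) ^ (1 - q / p) := by
  have hp : 0 < p := hq.trans_le hqp
  refine iSup₂_le fun f hf => ?_
  have hHolder := ENNReal.lintegral_le_Lp_mul_measure_univ_rpow (volume.restrict (ball c r)) f
    ((one_le_div hq).2 hqp)
  rw [Measure.restrict_apply_univ, one_div_div] at hHolder
  calc ∫⁻ x, f x * chiB c r x = ∫⁻ x in ball c r, f x := lintegral_mul_chiB c r f
    _ ≤ (∫⁻ x in ball c r, f x ^ (p / q)) ^ (q / p) * volume (ball c r) ^ (1 - q / p) := hHolder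
    _ ≤ kotheNorm n q φ w (chiB c r) ^ (q / p) * volume (ball c r) ^ (1 - q / p) := by
      rw [← lintegral_mul_chiB]
      gcongr
      exact lintegral_rpow_mul_le_kotheNorm _ hq hp hf

end Morrey

/-- if `1 ≤ q < p < ∞` then for every ball `B`,
`‖χ_B‖_{M^p} ‖χ_B‖_{(M^p)'} / |B| ≤ (‖χ_B‖_{M^q} ‖χ_B‖_{(M^q)'} / |B|)^{q/p}`;
in particular `A(M^q(φ)) ⊆ A(M^p(φ))`. -/
theorem stmt1 {n : ℕ} (p q : ℝ) (hq : 1 ≤ q) (hqp : q < p)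
    (φ : En n → ℝ → ℝ≥0∞) (w : En n → ℝ≥0∞) (c : En n) (r : ℝ) (hr : 0 < r) :
    morreyNorm n p φ w (chiB c r) * kotheNorm n p φ w (chiB c r) / volume (ball c r)
      ≤ (morreyNorm n q φ w (chiB c r) * kotheNorm n q φ w (chiB c r) /
          volume (ball c r)) ^ (q / p) := by
  have hq0 : 0 < q := one_pos.trans_le hq
  have hp0 : 0 < p := hq0.trans hqp
  calc morreyNorm n p φ w (chiB c r) * kotheNorm n p φ w (chiB c r) / volume (ball c r)
      ≤ morreyNorm n q φ w (chiB c r) ^ (q / p) * (kotheNorm n q φ w (chiB c r) ^ (q / p)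
          * volume (ball c r) ^ (1 - q / p)) / volume (ball c r) := by
        rw [morreyNorm_chiB c r hq0 hp0]
        gcongr
        exact kotheNorm_chiB_le c r hq0 hqp.le
    _ = _ := ENNReal.rpow_mul_mul_rpow_div_self _ _ (measure_ball_pos volume c hr).ne'
        measure_ball_lt_top.ne (div_pos hq0 hp0).le
end
end

section
/- Let $1\le p<\infty$, let $\mathcal B$ be a collection of balls in $\mathbb{R}^n$ whose union is $\mathbb{R}^n$, and let $M_{\mathcal B}f(x)=\sup_{x\in B,\,B\in\mathcal B}|B|^{-1}\int_B|f|$. If $M_{\mathcal B}$ is bounded from $\mathcal M^{p}(\varphi,w)$ to $W\mathcal M^{p}(\varphi,w)$ with operator norm $C$, then for every ball $B\in\mathcal B$, $\|\chi_B\|_{\mathcal M^{p}(\varphi,w)}\|\chi_B\|_{\mathcal M^{p}(\varphi,w)'}\le C|B|$; in particular $w\in A_{\mathcal B}(\mathcal M^{p}(\varphi))$ with $[w]_{A_{\mathcal B}(\mathcal M^{p}(\varphi))}\le C$. -/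
/-
The proof tests the boundedness of `M_ℬ` against functions `f` in the unit ball of
`𝓜^p(φ,w)`. For a ball `B ∈ ℬ`, the maximal function `M_ℬ f` exceeds every `t` below the
average `⨍_B f` on all of `B`, so `B` lies in a level set of `M_ℬ f` and
`t ‖χ_B‖_{𝓜^p} ≤ ‖M_ℬ f‖_{W𝓜^p} ≤ C`. Hence `(⨍_B f) ‖χ_B‖_{𝓜^p} ≤ C`, and taking the
supremum over `f` of `∫_B f = |B| ⨍_B f` gives the bound on the Köthe dual norm.
-/

open MeasureTheory Metric ENNReal NNReal Set

noncomputable section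

/-- Weak weighted Morrey quasinorm. -/
def weakMorreyNorm (n : ℕ) (p : ℝ) (φ : En n → ℝ → ℝ≥0∞) (w f : En n → ℝ≥0∞) : ℝ≥0∞ :=
  ⨆ (c : En n) (r : ℝ) (_ : 0 < r) (t : ℝ≥0),
    ((t : ℝ≥0∞) ^ p * (∫⁻ x in ball c r ∩ {x | (t : ℝ≥0∞) < f x}, w x) / φ c r) ^ (1 / p)

/-- Maximal operator associated to a family `ℬ` of balls, a ball being encoded by its
center and radius. -/
def maxOpB (n : ℕ) (ℬ : Set (En n × ℝ)) (f : En n → ℝ≥0∞) (x : En n) : ℝ≥0∞ :=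
  ⨆ (B : En n × ℝ) (_ : B ∈ ℬ) (_ : x ∈ ball B.1 B.2),
    (∫⁻ y in ball B.1 B.2, f y) / volume (ball B.1 B.2)

lemma lintegral_mul_indicator_one {α : Type*} [MeasurableSpace α] {μ : Measure α} {s : Set α}
    (hs : MeasurableSet s) (f : α → ℝ≥0∞) :
    ∫⁻ x, f x * s.indicator 1 x ∂μ = ∫⁻ x in s, f x ∂μ := by
  simp_rw [← indicator_mul_right, Pi.one_apply, mul_one]
  exact lintegral_indicator hs f

lemma indicator_one_rpow_mul {α : Type*} {s : Set α} {p : ℝ} (hp : 0 < p) (w : α → ℝ≥0∞)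
    (x : α) : s.indicator 1 x ^ p * w x = s.indicator w x := by
  by_cases hx : x ∈ s <;> simp [hx, ENNReal.zero_rpow_of_pos hp]

lemma mul_rpow_one_div_eq {t x : ℝ≥0∞} {p : ℝ} (hp : 0 < p) :
    t * x ^ (1 / p) = (t ^ p * x) ^ (1 / p) := by
  rw [ENNReal.mul_rpow_of_nonneg _ _ (by positivity), ← ENNReal.rpow_mul,
    mul_one_div_cancel hp.ne', ENNReal.rpow_one]

theorem mul_morreyNorm_indicator_le_weakMorreyNorm {n : ℕ} {p : ℝ} (hp : 0 < p)
    (φ : En n → ℝ → ℝ≥0∞) (w : En n → ℝ≥0∞) {E : Set (En n)} (hE : MeasurableSet E)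
    {g : En n → ℝ≥0∞} {t : ℝ≥0} (hEg : E ⊆ {x | (t : ℝ≥0∞) < g x}) :
    t * morreyNorm n p φ w (E.indicator 1) ≤ weakMorreyNorm n p φ w g := by
  simp only [morreyNorm, ENNReal.mul_iSup]
  refine iSup_le fun c => iSup₂_le fun r hr => ?_
  have hlevel : ∫⁻ x in ball c r, E.indicator 1 x ^ p * w x
      ≤ ∫⁻ x in ball c r ∩ {x | (t : ℝ≥0∞) < g x}, w x :=
    calc ∫⁻ x in ball c r, E.indicator 1 x ^ p * w x = ∫⁻ x in E ∩ ball c r, w x := by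
          simp_rw [indicator_one_rpow_mul hp]
          rw [lintegral_indicator hE, Measure.restrict_restrict hE]
      _ ≤ _ := lintegral_mono_set fun _ hx => mem_inter hx.2 (hEg hx.1)
  calc (t : ℝ≥0∞) * ((∫⁻ x in ball c r, E.indicator 1 x ^ p * w x) / φ c r) ^ (1 / p)
      = ((t : ℝ≥0∞) ^ p * ((∫⁻ x in ball c r, E.indicator 1 x ^ p * w x) / φ c r)) ^ (1 / p) :=
        mul_rpow_one_div_eq hp
    _ ≤ ((t : ℝ≥0∞) ^ p * (∫⁻ x in ball c r ∩ {x | (t : ℝ≥0∞) < g x}, w x) / φ c r) ^ (1 / p) := by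
        rw [mul_div_assoc]
        gcongr
    _ ≤ weakMorreyNorm n p φ w g := by
        unfold weakMorreyNorm
        exact le_iSup_of_le c (le_iSup_of_le r (le_iSup_of_le hr (le_iSup_of_le t le_rfl)))

lemma setLIntegral_div_volume_le_maxOpB {n : ℕ} {ℬ : Set (En n × ℝ)} (f : En n → ℝ≥0∞)
    {B : En n × ℝ} (hB : B ∈ ℬ) {x : En n} (hx : x ∈ ball B.1 B.2) :
    (∫⁻ y in ball B.1 B.2, f y) / volume (ball B.1 B.2) ≤ maxOpB n ℬ f x := by
  unfold maxOpB
  exact le_iSup_of_le B (le_iSup_of_le hB (le_iSup_of_le hx le_rfl))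

theorem setLIntegral_div_volume_mul_morreyNorm_chiB_le {n : ℕ} {p : ℝ} (hp : 0 < p)
    {ℬ : Set (En n × ℝ)} (φ : En n → ℝ → ℝ≥0∞) (w f : En n → ℝ≥0∞) {B : En n × ℝ}
    (hB : B ∈ ℬ) :
    (∫⁻ y in ball B.1 B.2, f y) / volume (ball B.1 B.2) * morreyNorm n p φ w (chiB B.1 B.2)
      ≤ weakMorreyNorm n p φ w (maxOpB n ℬ f) := by
  refine ENNReal.mul_le_of_forall_lt fun a ha b hb => ?_
  lift a to ℝ≥0 using ha.ne_top
  calc (a : ℝ≥0∞) * b ≤ a * morreyNorm n p φ w (chiB B.1 B.2) := by gcongr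
    _ ≤ weakMorreyNorm n p φ w (maxOpB n ℬ f) :=
      mul_morreyNorm_indicator_le_weakMorreyNorm hp φ w measurableSet_ball
        fun x hx => ha.trans_le (setLIntegral_div_volume_le_maxOpB f hB hx)

theorem stmt2_general {n : ℕ} (p : ℝ) (hp : 1 ≤ p) (ℬ : Set (En n × ℝ))
    (hpos : ∀ B ∈ ℬ, 0 < B.2)
    (φ : En n → ℝ → ℝ≥0∞) (w : En n → ℝ≥0∞) (C : ℝ≥0∞)
    (hbdd : ∀ f : En n → ℝ≥0∞,
      weakMorreyNorm n p φ w (maxOpB n ℬ f) ≤ C * morreyNorm n p φ w f) :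
    ∀ B ∈ ℬ, morreyNorm n p φ w (chiB B.1 B.2) * kotheNorm n p φ w (chiB B.1 B.2)
      ≤ C * volume (ball B.1 B.2) := by
  intro B hB
  have hV0 : volume (ball B.1 B.2) ≠ 0 := (measure_ball_pos volume B.1 (hpos B hB)).ne'
  simp only [kotheNorm, ENNReal.mul_iSup]
  refine iSup₂_le fun f hf => ?_
  rw [chiB, lintegral_mul_indicator_one measurableSet_ball]
  set N := morreyNorm n p φ w ((ball B.1 B.2).indicator 1)
  set I := ∫⁻ y in ball B.1 B.2, f y
  set V := volume (ball B.1 B.2)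
  calc N * I = I / V * N * V := by
        rw [mul_comm (I / V), mul_assoc, ENNReal.div_mul_cancel hV0 measure_ball_lt_top.ne]
    _ ≤ C * V := by
        gcongr
        calc I / V * N ≤ weakMorreyNorm n p φ w (maxOpB n ℬ f) :=
              setLIntegral_div_volume_mul_morreyNorm_chiB_le (by linarith) φ w f hB
          _ ≤ C * morreyNorm n p φ w f := hbdd f
          _ ≤ C := mul_le_of_le_one_right' hf

/-- if `M_ℬ` maps `M^p(φ,w)` to `WM^p(φ,w)` with operator norm `C`, then
for every ball `B ∈ ℬ`, `‖χ_B‖_{M^p} ‖χ_B‖_{(M^p)'} ≤ C |B|`; in particular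
`w ∈ A_ℬ(M^p(φ))` with constant at most `C`. -/
theorem stmt2 {n : ℕ} (p : ℝ) (hp : 1 ≤ p) (ℬ : Set (En n × ℝ))
    (hpos : ∀ B ∈ ℬ, 0 < B.2)
    (hcover : (⋃ B ∈ ℬ, ball B.1 B.2) = Set.univ)
    (φ : En n → ℝ → ℝ≥0∞) (w : En n → ℝ≥0∞) (C : ℝ≥0∞)
    (hbdd : ∀ f : En n → ℝ≥0∞,
      weakMorreyNorm n p φ w (maxOpB n ℬ f) ≤ C * morreyNorm n p φ w f) :
    ∀ B ∈ ℬ, morreyNorm n p φ w (chiB B.1 B.2) * kotheNorm n p φ w (chiB B.1 B.2)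
      ≤ C * volume (ball B.1 B.2) :=
  stmt2_general p hp ℬ hpos φ w C hbdd
end
end

section
/- Let $0<\lambda<n$, $1\le p<\infty$, $\varphi(B)=r_B^{\lambda}$ and $w(x)=|x|^{\lambda-n}$. Then $S(\chi_{B(0,1)})\notin\mathcal M^{p}(\varphi,w)$; consequently the Calderón operator $S$ is not bounded on $\mathcal M^{p}(\varphi,w)$, even though $\|\chi_{B}\|_{\mathcal M^{p}(\varphi,w)}\lesssim 1$ for every ball $B$ centered at the origin. -/
open MeasureTheory Metric ENNReal Set

noncomputable section

/-- The `n`-dimensional Calderón operator. -/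
def calderonS (n : ℕ) (f : En n → ℝ≥0∞) (x : En n) : ℝ≥0∞ :=
  (∫⁻ y in ball (0 : En n) ‖x‖, f y) / ENNReal.ofReal (‖x‖ ^ n) +
    ∫⁻ y in {y : En n | ‖x‖ < ‖y‖}, f y / ENNReal.ofReal (‖y‖ ^ n)

/-- Samko-type Morrey parameter function `φ(B) = r_B^λ`. -/
def phiSamko (n : ℕ) (lam : ℝ) : En n → ℝ → ℝ≥0∞ := fun _ r => ENNReal.ofReal (r ^ lam)

/-- The power weight `w(x) = |x|^{λ-n}`. -/
def wSamko (n : ℕ) (lam : ℝ) : En n → ℝ≥0∞ :=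
  fun y => ENNReal.ofReal (‖y‖ ^ (lam - (n : ℝ)))

/-! For `‖x‖ < 2⁻ᵐ`, `S χ_{B(0,1)}(x) ≥ ∫_{‖x‖<‖y‖<1} ‖y‖⁻ⁿ dy` is at least `m` times the
volume of the shell `{1/2 ≤ ‖y‖ < 1}`, since each of the `m` dyadic shells in between contributes
that much. The weight is homogeneous of degree `λ - n`, so `∫_{B(0,r)} w = r^λ ∫_{B(0,1)} w`, and
`∫_{B(0,1)} w` is positive (and finite because `λ > 0`). Hence the Morrey average of
`(S χ_{B(0,1)})^p` over `B(0, 2⁻ᵐ)` is `≳ m^p`, which is unbounded.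

Conversely every ball `B(c,r)` has `w`-mass `≲ r^λ`: if `‖c‖ ≥ 2r` then `w ≤ r^(λ-n)` on it, and
otherwise `B(c,r) ⊆ B(0,3r)`. So every function bounded by `1`, in particular every `χ_B`, has
Morrey norm `≲ 1`, and `S` cannot be bounded. -/

theorem MeasureTheory.Measure.lintegral_comp_smul {E : Type*} [NormedAddCommGroup E]
    [NormedSpace ℝ E] [MeasurableSpace E] [BorelSpace E] [FiniteDimensional ℝ E]
    (μ : Measure E) [μ.IsAddHaarMeasure] (g : E → ℝ≥0∞) {r : ℝ} (hr : r ≠ 0) :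
    ∫⁻ x, g (r • x) ∂μ = ENNReal.ofReal |(r ^ Module.finrank ℝ E)⁻¹| * ∫⁻ x, g x ∂μ := by
  rw [← smul_eq_mul, ← lintegral_smul_measure, ← Measure.map_addHaar_smul μ hr,
    ← MeasurableEquiv.coe_smul₀ hr, lintegral_map_equiv]
  rfl

section
variable {n : ℕ} {lam : ℝ}

theorem volume_ball_En (hn : 0 < n) (c : En n) {r : ℝ} (hr : 0 ≤ r) :
    volume (ball c r) = ENNReal.ofReal (r ^ n) * volume (ball (0 : En n) 1) := by
  have : Nonempty (Fin n) := ⟨⟨0, hn⟩⟩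
  rw [Measure.addHaar_ball _ _ hr, finrank_euclideanSpace_fin]

/-- The volume of the shell `{1/2 ≤ ‖y‖ < 1}` in `En n`. -/
def halfShellVolume (n : ℕ) : ℝ≥0∞ :=
  ENNReal.ofReal (1 - 2⁻¹ ^ n) * volume (ball (0 : En n) 1)

theorem halfShellVolume_pos (hn : 0 < n) : 0 < halfShellVolume n := by
  refine ENNReal.mul_pos ?_ (measure_ball_pos _ _ one_pos).ne'
  rw [ne_eq, ENNReal.ofReal_eq_zero, not_le, sub_pos]
  exact pow_lt_one₀ (by norm_num) (by norm_num) hn.ne'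

theorem volume_ball_sdiff_ball_half (hn : 0 < n) {s : ℝ} (hs : 0 ≤ s) :
    volume (ball (0 : En n) s \ ball 0 (s / 2)) = ENNReal.ofReal (s ^ n) * halfShellVolume n := by
  have hs2 : 0 ≤ s / 2 := by positivity
  rw [measure_sdiff (ball_subset_ball (by linarith)) measurableSet_ball.nullMeasurableSet
      measure_ball_lt_top.ne, volume_ball_En hn 0 hs, volume_ball_En hn 0 hs2,
    ← ENNReal.sub_mul (fun _ _ => measure_ball_lt_top.ne),
    ← ENNReal.ofReal_sub _ (pow_nonneg hs2 n), halfShellVolume, ← mul_assoc,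
    ← ENNReal.ofReal_mul (by positivity), div_eq_mul_inv, mul_pow, mul_one_sub]

theorem halfShellVolume_le_setLIntegral_inv_norm_pow (hn : 0 < n) {s : ℝ} (hs : 0 < s) :
    halfShellVolume n
      ≤ ∫⁻ y in ball (0 : En n) s \ ball 0 (s / 2), (ENNReal.ofReal (‖y‖ ^ n))⁻¹ := by
  have hsn : ENNReal.ofReal (s ^ n) ≠ 0 := (ENNReal.ofReal_pos.2 (by positivity)).ne'
  calc halfShellVolume n
      = (ENNReal.ofReal (s ^ n))⁻¹ * volume (ball (0 : En n) s \ ball 0 (s / 2)) := by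
        rw [volume_ball_sdiff_ball_half hn hs.le, ← mul_assoc,
          ENNReal.inv_mul_cancel hsn ofReal_ne_top, one_mul]
    _ = ∫⁻ _ in ball (0 : En n) s \ ball 0 (s / 2), (ENNReal.ofReal (s ^ n))⁻¹ :=
        (setLIntegral_const _ _).symm
    _ ≤ _ := setLIntegral_mono' (measurableSet_ball.diff measurableSet_ball) fun y hy =>
        ENNReal.inv_le_inv' (ENNReal.ofReal_le_ofReal
          (pow_le_pow_left₀ (norm_nonneg y) (mem_ball_zero_iff.1 hy.1).le n))

theorem natCast_mul_halfShellVolume_le (hn : 0 < n) (m : ℕ) :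
    m * halfShellVolume n
      ≤ ∫⁻ y in ball (0 : En n) 1 \ ball 0 (2⁻¹ ^ m), (ENNReal.ofReal (‖y‖ ^ n))⁻¹ := by
  induction m with
  | zero => simp
  | succ m ih =>
    have hpos : (0 : ℝ) < 2⁻¹ ^ m := by positivity
    have hsplit : ball (0 : En n) 1 \ ball 0 (2⁻¹ ^ (m + 1))
        = (ball (0 : En n) 1 \ ball 0 (2⁻¹ ^ m)) ∪ (ball 0 (2⁻¹ ^ m) \ ball 0 (2⁻¹ ^ m / 2)) := by
      rw [pow_succ, ← div_eq_mul_inv]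
      exact (sdiff_union_sdiff_cancel (ball_subset_ball (pow_le_one₀ (by norm_num) (by norm_num)))
        (ball_subset_ball (by linarith))).symm
    rw [hsplit, lintegral_union (measurableSet_ball.diff measurableSet_ball)
      (disjoint_sdiff_left.mono_right sdiff_subset), Nat.cast_succ, add_mul, one_mul]
    exact add_le_add ih (halfShellVolume_le_setLIntegral_inv_norm_pow hn hpos)

theorem natCast_mul_halfShellVolume_le_calderonS (hn : 0 < n) (m : ℕ) {x : En n}
    (hx : ‖x‖ < 2⁻¹ ^ m) :
    m * halfShellVolume n ≤ calderonS n (chiB (0 : En n) 1) x := by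
  calc m * halfShellVolume n
      ≤ ∫⁻ y in ball (0 : En n) 1 \ ball 0 (2⁻¹ ^ m), (ENNReal.ofReal (‖y‖ ^ n))⁻¹ :=
        natCast_mul_halfShellVolume_le hn m
    _ = ∫⁻ y in ball (0 : En n) 1 \ ball 0 (2⁻¹ ^ m),
          chiB (0 : En n) 1 y / ENNReal.ofReal (‖y‖ ^ n) :=
        setLIntegral_congr_fun (measurableSet_ball.diff measurableSet_ball) fun y hy => by
          rw [chiB, indicator_of_mem hy.1, Pi.one_apply, one_div]
    _ ≤ ∫⁻ y in {y : En n | ‖x‖ < ‖y‖}, chiB (0 : En n) 1 y / ENNReal.ofReal (‖y‖ ^ n) :=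
        lintegral_mono_set fun y hy =>
          hx.trans_le (not_lt.1 fun h => hy.2 (mem_ball_zero_iff.2 h))
    _ ≤ calderonS n (chiB (0 : En n) 1) x := le_add_self

theorem wSamko_smul {r : ℝ} (hr : 0 < r) (x : En n) :
    wSamko n lam (r • x) = ENNReal.ofReal (r ^ (lam - n)) * wSamko n lam x := by
  rw [wSamko, wSamko, norm_smul, Real.norm_of_nonneg hr.le,
    Real.mul_rpow hr.le (norm_nonneg x), ENNReal.ofReal_mul (by positivity)]

theorem measurable_wSamko : Measurable (wSamko n lam) := by
  unfold wSamko; fun_prop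

theorem setLIntegral_ball_zero_wSamko {r : ℝ} (hr : 0 < r) :
    ∫⁻ x in ball (0 : En n) r, wSamko n lam x
      = ENNReal.ofReal (r ^ lam) * ∫⁻ x in ball (0 : En n) 1, wSamko n lam x := by
  have hind : ∀ x : En n, (ball 0 r).indicator (wSamko n lam) (r • x)
      = ENNReal.ofReal (r ^ (lam - n)) * (ball 0 1).indicator (wSamko n lam) x := by
    intro x
    have hmem : r • x ∈ ball (0 : En n) r ↔ x ∈ ball (0 : En n) 1 := by
      simp [norm_smul, abs_of_pos hr, hr]
    by_cases hx : x ∈ ball (0 : En n) 1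
    · rw [indicator_of_mem (hmem.2 hx), indicator_of_mem hx, wSamko_smul hr]
    · rw [indicator_of_notMem (mt hmem.1 hx), indicator_of_notMem hx, mul_zero]
  have hscale := Measure.lintegral_comp_smul volume ((ball (0 : En n) r).indicator (wSamko n lam))
    hr.ne'
  simp only [hind, lintegral_const_mul' _ _ ofReal_ne_top, lintegral_indicator measurableSet_ball,
    finrank_euclideanSpace_fin] at hscale
  have hrn : ENNReal.ofReal (r ^ n) * ENNReal.ofReal |(r ^ n)⁻¹| = 1 := by
    rw [← ENNReal.ofReal_mul (by positivity), abs_of_pos (by positivity),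
      mul_inv_cancel₀ (by positivity), ENNReal.ofReal_one]
  calc ∫⁻ x in ball (0 : En n) r, wSamko n lam x
      = ENNReal.ofReal (r ^ n) *
          (ENNReal.ofReal (r ^ (lam - n)) * ∫⁻ x in ball (0 : En n) 1, wSamko n lam x) := by
        rw [hscale, ← mul_assoc, hrn, one_mul]
    _ = _ := by
        rw [← mul_assoc, ← ENNReal.ofReal_mul (by positivity), ← Real.rpow_natCast,
          ← Real.rpow_add hr, add_sub_cancel]

theorem setLIntegral_unitBall_wSamko_lt_top (hn : 0 < n) (hlam0 : 0 < lam) :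
    ∫⁻ x in ball (0 : En n) 1, wSamko n lam x < ⊤ := by
  have hint : IntegrableOn (fun x : En n => ‖x‖ ^ (lam - n)) (ball 0 1) :=
    integrableOn_ball_of_norm_le_rpow (C := 1) (α := n - lam)
      (by rw [finrank_euclideanSpace_fin]; exact hn)
      (by simpa using hlam0) (ae_of_all _ fun x => by
        rw [one_mul, neg_sub, Real.norm_of_nonneg (by positivity)])
      (measurable_norm.pow_const _).aestronglyMeasurable
  exact hint.lintegral_lt_top

theorem setLIntegral_unitBall_wSamko_pos (hn : 0 < n) :
    0 < ∫⁻ x in ball (0 : En n) 1, wSamko n lam x := by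
  have : Nontrivial (En n) := by
    have : Nonempty (Fin n) := ⟨⟨0, hn⟩⟩
    infer_instance
  rw [setLIntegral_pos_iff measurable_wSamko]
  have hsupp : {0}ᶜ ⊆ Function.support (wSamko n lam) := fun x hx => by
    simp only [Function.mem_support, wSamko, ne_eq, ENNReal.ofReal_eq_zero, not_le]
    exact Real.rpow_pos_of_pos (norm_pos_iff.2 hx) _
  calc (0 : ℝ≥0∞) < volume (ball (0 : En n) 1) := measure_ball_pos _ _ one_pos
    _ = volume ({0}ᶜ ∩ ball (0 : En n) 1) := by
        rw [← sdiff_eq_compl_inter, measure_sdiff_null (measure_singleton 0)]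
    _ ≤ _ := measure_mono (inter_subset_inter_left _ hsupp)

theorem morreyNorm_calderonS_chiB_eq_top (hn : 0 < n) {p : ℝ} (hp : 0 < p) :
    morreyNorm n p (phiSamko n lam) (wSamko n lam) (calderonS n (chiB (0 : En n) 1)) = ⊤ := by
  set A := ∫⁻ x in ball (0 : En n) 1, wSamko n lam x
  set c := halfShellVolume n
  have hgrowth : ∀ m : ℕ, m * (c * A ^ (1 / p)) ≤
      morreyNorm n p (phiSamko n lam) (wSamko n lam) (calderonS n (chiB (0 : En n) 1)) := by
    intro m
    have hr : (0 : ℝ) < 2⁻¹ ^ m := by positivity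
    have hφ : phiSamko n lam 0 (2⁻¹ ^ m) ≠ 0 := (ENNReal.ofReal_pos.2 (by positivity)).ne'
    have hint : (m * c) ^ p * A * phiSamko n lam 0 (2⁻¹ ^ m)
        ≤ ∫⁻ x in ball (0 : En n) (2⁻¹ ^ m), calderonS n (chiB 0 1) x ^ p * wSamko n lam x :=
      calc (m * c) ^ p * A * phiSamko n lam 0 (2⁻¹ ^ m)
          = (m * c) ^ p * ∫⁻ x in ball (0 : En n) (2⁻¹ ^ m), wSamko n lam x := by
            rw [setLIntegral_ball_zero_wSamko hr, phiSamko, mul_assoc, mul_comm A]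
        _ ≤ ∫⁻ x in ball (0 : En n) (2⁻¹ ^ m), (m * c) ^ p * wSamko n lam x :=
            lintegral_const_mul_le _ _
        _ ≤ _ := setLIntegral_mono' measurableSet_ball fun x hx => by
            gcongr
            exact natCast_mul_halfShellVolume_le_calderonS hn m (mem_ball_zero_iff.1 hx)
    calc (m : ℝ≥0∞) * (c * A ^ (1 / p)) = ((m * c) ^ p * A) ^ (1 / p) := by
          rw [ENNReal.mul_rpow_of_nonneg _ _ (by positivity), ← ENNReal.rpow_mul,
            mul_one_div_cancel hp.ne', ENNReal.rpow_one, mul_assoc]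
      _ ≤ ((∫⁻ x in ball (0 : En n) (2⁻¹ ^ m), calderonS n (chiB 0 1) x ^ p * wSamko n lam x)
            / phiSamko n lam 0 (2⁻¹ ^ m)) ^ (1 / p) := by
          gcongr
          rwa [ENNReal.le_div_iff_mul_le (Or.inl hφ) (Or.inl ofReal_ne_top)]
      _ ≤ _ := by
          rw [morreyNorm]
          exact le_iSup_of_le (0 : En n) <| le_iSup_of_le _ <| le_iSup_of_le hr le_rfl
  have hcA : c * A ^ (1 / p) ≠ 0 := mul_ne_zero (halfShellVolume_pos hn).ne'
    (ENNReal.rpow_pos_of_nonneg (setLIntegral_unitBall_wSamko_pos hn) (by positivity)).ne'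
  rw [eq_top_iff]
  calc (⊤ : ℝ≥0∞) = (⨆ m : ℕ, (m : ℝ≥0∞)) * (c * A ^ (1 / p)) := by
        rw [iSup_natCast, ENNReal.top_mul hcA]
    _ ≤ _ := by rw [ENNReal.iSup_mul]; exact iSup_le hgrowth

theorem setLIntegral_ball_wSamko_le_of_two_mul_le_norm (hn : 0 < n) (hlamn : lam ≤ n)
    {c : En n} {r : ℝ} (hr : 0 < r) (hc : 2 * r ≤ ‖c‖) :
    ∫⁻ x in ball c r, wSamko n lam x ≤ ENNReal.ofReal (r ^ lam) * volume (ball (0 : En n) 1) := by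
  have hw : ∀ x ∈ ball c r, wSamko n lam x ≤ ENNReal.ofReal (r ^ (lam - n)) := fun x hx => by
    have hrx : r ≤ ‖x‖ := by
      have := norm_sub_norm_le c x
      rw [← dist_eq_norm, dist_comm] at this
      linarith [mem_ball.1 hx]
    exact ENNReal.ofReal_le_ofReal (Real.rpow_le_rpow_of_nonpos hr hrx (by linarith))
  calc ∫⁻ x in ball c r, wSamko n lam x
      ≤ ∫⁻ _ in ball c r, ENNReal.ofReal (r ^ (lam - n)) := setLIntegral_mono' measurableSet_ball hw
    _ = _ := by
        rw [setLIntegral_const, volume_ball_En hn c hr.le, ← mul_assoc,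
          ← ENNReal.ofReal_mul (by positivity), ← Real.rpow_natCast, ← Real.rpow_add hr,
          sub_add_cancel]

theorem exists_setLIntegral_ball_wSamko_le (hn : 0 < n) (hlam0 : 0 < lam) (hlamn : lam ≤ n) :
    ∃ K : ℝ≥0∞, K ≠ ⊤ ∧ ∀ (c : En n) (r : ℝ), 0 < r →
      ∫⁻ x in ball c r, wSamko n lam x ≤ K * ENNReal.ofReal (r ^ lam) := by
  set A := ∫⁻ x in ball (0 : En n) 1, wSamko n lam x
  refine ⟨ENNReal.ofReal (3 ^ lam) * A + volume (ball (0 : En n) 1),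
    add_ne_top.2 ⟨mul_ne_top ofReal_ne_top (setLIntegral_unitBall_wSamko_lt_top hn hlam0).ne,
      measure_ball_lt_top.ne⟩, fun c r hr => ?_⟩
  rcases le_or_gt ‖c‖ (2 * r) with hc | hc
  · calc ∫⁻ x in ball c r, wSamko n lam x
        ≤ ∫⁻ x in ball (0 : En n) (3 * r), wSamko n lam x :=
          lintegral_mono_set (ball_subset_ball' (by rw [dist_zero_right]; linarith))
      _ = ENNReal.ofReal (3 ^ lam) * A * ENNReal.ofReal (r ^ lam) := by
          rw [setLIntegral_ball_zero_wSamko (by positivity), Real.mul_rpow (by norm_num) hr.le,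
            ENNReal.ofReal_mul (by positivity)]
          ring
      _ ≤ _ := by gcongr; exact le_self_add
  · calc ∫⁻ x in ball c r, wSamko n lam x
        ≤ ENNReal.ofReal (r ^ lam) * volume (ball (0 : En n) 1) :=
          setLIntegral_ball_wSamko_le_of_two_mul_le_norm hn hlamn hr hc.le
      _ ≤ _ := by rw [mul_comm]; gcongr; exact le_add_self

theorem morreyNorm_le_of_le_one {n : ℕ} {p : ℝ} {φ : En n → ℝ → ℝ≥0∞} {w f : En n → ℝ≥0∞}
    {K : ℝ≥0∞} (hp : 0 < p) (hf : ∀ x, f x ≤ 1)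
    (hw : ∀ (c : En n) (r : ℝ), 0 < r → ∫⁻ x in ball c r, w x ≤ K * φ c r) :
    morreyNorm n p φ w f ≤ K ^ (1 / p) := by
  refine iSup_le fun c => iSup_le fun r => iSup_le fun hr => ?_
  gcongr
  refine ENNReal.div_le_of_le_mul ((setLIntegral_mono' measurableSet_ball fun x _ => ?_).trans
    (hw c r hr))
  exact mul_le_of_le_one_left zero_le (ENNReal.rpow_le_one (hf x) hp.le)

theorem chiB_le_one (c : En n) (R : ℝ) (x : En n) : chiB c R x ≤ 1 :=
  indicator_le (fun _ _ => le_rfl) x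

end

theorem stmt9_general {n : ℕ} (p lam : ℝ) (hp : 1 ≤ p)
    (hlam0 : 0 < lam) (hlamn : lam < n) :
    morreyNorm n p (phiSamko n lam) (wSamko n lam) (calderonS n (chiB (0 : En n) 1)) = ⊤
    ∧ ¬ (∃ C : ℝ≥0∞, C ≠ ⊤ ∧ ∀ f : En n → ℝ≥0∞,
        morreyNorm n p (phiSamko n lam) (wSamko n lam) (calderonS n f)
          ≤ C * morreyNorm n p (phiSamko n lam) (wSamko n lam) f)
    ∧ ∃ C : ℝ≥0∞, C ≠ ⊤ ∧ ∀ R : ℝ, 0 < R →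
        morreyNorm n p (phiSamko n lam) (wSamko n lam) (chiB (0 : En n) R) ≤ C := by
  have hn : 0 < n := by exact_mod_cast hlam0.trans hlamn
  have hp0 : 0 < p := one_pos.trans_le hp
  obtain ⟨K, hK, hwK⟩ := exists_setLIntegral_ball_wSamko_le hn hlam0 hlamn.le
  have hχ : ∀ R, morreyNorm n p (phiSamko n lam) (wSamko n lam) (chiB (0 : En n) R) ≤ K ^ (1 / p) :=
    fun R => morreyNorm_le_of_le_one hp0 (chiB_le_one 0 R) hwK
  have hKp : K ^ (1 / p) ≠ ⊤ := rpow_ne_top_of_nonneg (by positivity) hK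
  have hS := morreyNorm_calderonS_chiB_eq_top (lam := lam) hn hp0
  refine ⟨hS, ?_, K ^ (1 / p), hKp, fun R _ => hχ R⟩
  rintro ⟨C, hC, hbounded⟩
  have hχS := (hbounded (chiB 0 1)).trans (mul_le_mul_right (hχ 1) C)
  rw [hS, top_le_iff] at hχS
  exact mul_ne_top hC hKp hχS

/-- with `φ(B) = r_B^λ` and `w(x) = |x|^{λ-n}`, `0 < λ < n`, one has
`S(χ_{B(0,1)}) ∉ M^p(φ,w)`; hence `S` is not bounded on `M^p(φ,w)`, even though
`‖χ_B‖_{M^p(φ,w)} ≲ 1` for every ball centered at the origin. -/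
theorem stmt9 {n : ℕ} (hn : 0 < n) (p lam : ℝ) (hp : 1 ≤ p)
    (hlam0 : 0 < lam) (hlamn : lam < n) :
    morreyNorm n p (phiSamko n lam) (wSamko n lam) (calderonS n (chiB (0 : En n) 1)) = ⊤
    ∧ ¬ (∃ C : ℝ≥0∞, C ≠ ⊤ ∧ ∀ f : En n → ℝ≥0∞,
        morreyNorm n p (phiSamko n lam) (wSamko n lam) (calderonS n f)
          ≤ C * morreyNorm n p (phiSamko n lam) (wSamko n lam) f)
    ∧ ∃ C : ℝ≥0∞, C ≠ ⊤ ∧ ∀ R : ℝ, 0 < R →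
        morreyNorm n p (phiSamko n lam) (wSamko n lam) (chiB (0 : En n) R) ≤ C :=
  stmt9_general p lam hp hlam0 hlamn
end
end

section
/- Let $1\le p<\infty$, $0\le\lambda_1,\lambda_2<n$, $\lambda_1+\lambda_2<n$, and $\varphi(B)=r_B^{\lambda_1}w(B)^{\lambda_2/n}$. Then $L^{\frac{pn}{n-\lambda_1-\lambda_2}}(w^{\frac{n-\lambda_2}{n-\lambda_1-\lambda_2}})$ embeds continuously into $\mathcal M^{p}(\varphi,w)$, with embedding constant depending only on $n$, $\lambda_1$, $\lambda_2$ and $p$ (not on $w$). -/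
/-!
On a ball `B`, with `d = n - λ₁ - λ₂`, factor
`f^p w = (f^{pn/d} w^{(n-λ₂)/d})^{d/n} · w^{λ₂/n} · 1^{λ₁/n}`
and apply Hölder's inequality with the three exponents `d/n`, `λ₂/n`, `λ₁/n`, which sum to `1`.
The last factor contributes `|B|^{λ₁/n} = |B(0,1)|^{λ₁/n} r_B^{λ₁}`, which together with
`w(B)^{λ₂/n}` is `|B(0,1)|^{λ₁/n} φ(B)`; so the embedding constant is `|B(0,1)|^{λ₁/(pn)}`.
-/

open MeasureTheory Metric ENNReal Set

noncomputable section

/-- The Morrey parameter function `φ(B) = r_B^{λ₁} w(B)^{λ₂/n}`. -/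
def phiKS (n : ℕ) (lam₁ lam₂ : ℝ) (w : En n → ℝ≥0∞) : En n → ℝ → ℝ≥0∞ :=
  fun c r => ENNReal.ofReal (r ^ lam₁) * (∫⁻ x in ball c r, w x) ^ (lam₂ / (n : ℝ))

theorem lintegral_rpow_mul_rpow_le_of_add_le_one {α : Type*} [MeasurableSpace α]
    {μ : Measure α} {g u : α → ℝ≥0∞} (hg : AEMeasurable g μ) (hu : AEMeasurable u μ)
    {a b : ℝ} (ha : 0 ≤ a) (hb : 0 ≤ b) (hab : a + b ≤ 1) :
    ∫⁻ x, g x ^ a * u x ^ b ∂μ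
      ≤ (∫⁻ x, g x ∂μ) ^ a * (∫⁻ x, u x ∂μ) ^ b * μ univ ^ (1 - a - b) := by
  have key := ENNReal.lintegral_prod_norm_pow_le (μ := μ) Finset.univ
    (f := ![g, u, 1]) (p := ![a, b, 1 - a - b])
    (by intro i _; fin_cases i; exacts [hg, hu, aemeasurable_const])
    (by simp [Fin.sum_univ_three])
    (by intro i _; fin_cases i <;> simp <;> linarith)
  simpa [Fin.prod_univ_three] using key

theorem lintegral_rpow_mul_le_holder {α : Type*} [MeasurableSpace α] {μ : Measure α}
    {f w : α → ℝ≥0∞} (hf : AEMeasurable f μ) (hw : AEMeasurable w μ) (p : ℝ) {θ β : ℝ}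
    (hθ : 0 < θ) (hβ : 0 ≤ β) (hθβ : θ + β ≤ 1) :
    ∫⁻ x, f x ^ p * w x ∂μ
      ≤ (∫⁻ x, f x ^ (p / θ) * w x ^ ((1 - β) / θ) ∂μ) ^ θ * (∫⁻ x, w x ∂μ) ^ β
        * μ univ ^ (1 - θ - β) := by
  have hsplit : ∀ x, f x ^ p * w x = (f x ^ (p / θ) * w x ^ ((1 - β) / θ)) ^ θ * w x ^ β := by
    intro x
    rw [ENNReal.mul_rpow_of_nonneg _ _ hθ.le, ← ENNReal.rpow_mul, ← ENNReal.rpow_mul,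
      div_mul_cancel₀ _ hθ.ne', div_mul_cancel₀ _ hθ.ne', mul_assoc,
      ← ENNReal.rpow_add_of_nonneg _ _ (by linarith) hβ, sub_add_cancel, ENNReal.rpow_one]
  simp_rw [hsplit]
  exact lintegral_rpow_mul_rpow_le_of_add_le_one
    ((hf.pow_const _).mul (hw.pow_const _)) hw hθ.le hβ hθβ

theorem addHaar_ball_rpow {E : Type*} [NormedAddCommGroup E] [NormedSpace ℝ E]
    [FiniteDimensional ℝ E] [MeasurableSpace E] [BorelSpace E] [Nontrivial E]
    (μ : Measure E) [μ.IsAddHaarMeasure] (c : E) {r : ℝ} (hr : 0 < r) (s : ℝ) :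
    μ (ball c r) ^ (s / Module.finrank ℝ E)
      = ENNReal.ofReal (r ^ s) * μ (ball 0 1) ^ (s / Module.finrank ℝ E) := by
  have hd : (Module.finrank ℝ E : ℝ) ≠ 0 := by exact_mod_cast Module.finrank_pos.ne'
  rw [Measure.addHaar_ball μ c hr.le,
    ENNReal.mul_rpow_of_ne_top ofReal_ne_top measure_ball_lt_top.ne,
    ENNReal.ofReal_rpow_of_pos (by positivity), ← Real.rpow_natCast, ← Real.rpow_mul hr.le,
    mul_div_cancel₀ _ hd]

theorem setLIntegral_rpow_mul_le_phiKS {n : ℕ} (p : ℝ) {lam₁ lam₂ : ℝ} (h1 : 0 ≤ lam₁)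
    (h2 : 0 ≤ lam₂) (hsum : lam₁ + lam₂ < n) {w f : En n → ℝ≥0∞} (hw : Measurable w)
    (hf : Measurable f) (c : En n) {r : ℝ} (hr : 0 < r) :
    ∫⁻ x in ball c r, f x ^ p * w x
      ≤ volume (ball (0 : En n) 1) ^ (lam₁ / n)
        * (∫⁻ x in ball c r, f x ^ (p * n / (n - lam₁ - lam₂))
            * w x ^ ((n - lam₂) / (n - lam₁ - lam₂))) ^ ((n - lam₁ - lam₂) / n)
        * phiKS n lam₁ lam₂ w c r := by
  have hN : (0 : ℝ) < n := by linarith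
  have hd : (0 : ℝ) < n - lam₁ - lam₂ := by linarith
  have : Nonempty (Fin n) := ⟨⟨0, by exact_mod_cast hN⟩⟩
  have holder := lintegral_rpow_mul_le_holder (μ := volume.restrict (ball c r))
    hf.aemeasurable hw.aemeasurable p (θ := (n - lam₁ - lam₂) / n) (β := lam₂ / n)
    (by positivity) (by positivity) (by rw [← add_div, div_le_one hN]; linarith)
  have hexp_f : p / ((n - lam₁ - lam₂) / n) = p * n / (n - lam₁ - lam₂) :=
    div_div_eq_mul_div _ _ _
  have hexp_w : (1 - lam₂ / n) / ((n - lam₁ - lam₂) / n) = (n - lam₂) / (n - lam₁ - lam₂) := by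
    field_simp
  have hexp_vol : 1 - (n - lam₁ - lam₂) / n - lam₂ / n = lam₁ / n := by
    field_simp; ring
  have hvol := addHaar_ball_rpow (volume : Measure (En n)) c hr lam₁
  rw [finrank_euclideanSpace_fin] at hvol
  rw [hexp_f, hexp_w, hexp_vol, Measure.restrict_apply_univ, hvol] at holder
  exact holder.trans_eq (by rw [phiKS]; ring)

theorem stmt14_general {n : ℕ} (p lam₁ lam₂ : ℝ) (hp : 1 ≤ p)
    (h1 : 0 ≤ lam₁) (h2 : 0 ≤ lam₂)
    (hsum : lam₁ + lam₂ < n) :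
    ∃ C : ℝ≥0∞, C ≠ ⊤ ∧ ∀ (w f : En n → ℝ≥0∞), Measurable w → Measurable f →
      morreyNorm n p (phiKS n lam₁ lam₂ w) w f
        ≤ C * (∫⁻ x, f x ^ (p * n / ((n : ℝ) - lam₁ - lam₂)) *
            w x ^ (((n : ℝ) - lam₂) / ((n : ℝ) - lam₁ - lam₂)))
          ^ (((n : ℝ) - lam₁ - lam₂) / (p * n)) := by
  have hN : (0 : ℝ) < n := by linarith
  have hp₀ : 0 < p := by linarith
  have hd : (0 : ℝ) < n - lam₁ - lam₂ := by linarith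
  refine ⟨volume (ball (0 : En n) 1) ^ (lam₁ / (p * n)),
    rpow_ne_top_of_nonneg (by positivity) measure_ball_lt_top.ne, fun w f hw hf => ?_⟩
  refine iSup_le fun c => iSup₂_le fun r hr => ?_
  calc _ ≤ (volume (ball (0 : En n) 1) ^ (lam₁ / n)
          * (∫⁻ x in ball c r, f x ^ (p * n / (n - lam₁ - lam₂))
            * w x ^ ((n - lam₂) / (n - lam₁ - lam₂))) ^ ((n - lam₁ - lam₂) / n)) ^ (1 / p) :=
        rpow_le_rpow (div_le_of_le_mul
          (setLIntegral_rpow_mul_le_phiKS p h1 h2 hsum hw hf c hr)) (by positivity)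
    _ = volume (ball (0 : En n) 1) ^ (lam₁ / (p * n))
          * (∫⁻ x in ball c r, f x ^ (p * n / (n - lam₁ - lam₂))
            * w x ^ ((n - lam₂) / (n - lam₁ - lam₂))) ^ ((n - lam₁ - lam₂) / (p * n)) := by
        rw [mul_rpow_of_nonneg _ _ (by positivity), ← rpow_mul, ← rpow_mul,
          div_mul_div_comm, div_mul_div_comm, mul_one, mul_one, mul_comm (n : ℝ) p]
    _ ≤ _ := by
        gcongr
        exact Measure.restrict_le_self

/-- the embedding
`L^{pn/(n-λ₁-λ₂)}(w^{(n-λ₂)/(n-λ₁-λ₂)}) ↪ M^p(φ,w)` with `φ(B) = r_B^{λ₁} w(B)^{λ₂/n}`,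
with a constant independent of `w`. -/
theorem stmt14 {n : ℕ} (p lam₁ lam₂ : ℝ) (hp : 1 ≤ p)
    (h1 : 0 ≤ lam₁) (h1' : lam₁ < n) (h2 : 0 ≤ lam₂) (h2' : lam₂ < n)
    (hsum : lam₁ + lam₂ < n) :
    ∃ C : ℝ≥0∞, C ≠ ⊤ ∧ ∀ (w f : En n → ℝ≥0∞), Measurable w → Measurable f →
      morreyNorm n p (phiKS n lam₁ lam₂ w) w f
        ≤ C * (∫⁻ x, f x ^ (p * n / ((n : ℝ) - lam₁ - lam₂)) *
            w x ^ (((n : ℝ) - lam₂) / ((n : ℝ) - lam₁ - lam₂)))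
          ^ (((n : ℝ) - lam₁ - lam₂) / (p * n)) :=
  stmt14_general p lam₁ lam₂ hp h1 h2 hsum
end
end

section
/- Let $1\le p<\infty$, $0\le\lambda_1,\lambda_2<n$, $0<\lambda_1+\lambda_2<n$, $\varphi(B)=r_B^{\lambda_1}w(B)^{\lambda_2/n}$. If $w\in A(\mathcal M^{p}(\varphi))$, then $w$ satisfies the reverse doubling condition with exponent $\lambda_1/(n-\lambda_2)$: for all balls $B_1\subset B_2$, $w(B_1)/w(B_2)\le C(|B_1|/|B_2|)^{\lambda_1/(n-\lambda_2)}$, with $C$ depending only on $[w]_{A(\mathcal M^{p}(\varphi))}$, $n$, $p$, $\lambda_1$, $\lambda_2$. -/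
/-!
Test the condition `w ∈ A(M^p(φ))` on the larger ball `B₂` against `f = χ_{B₂} w^{-ε}`,
`ε = λ₁/(pn)`. By Hölder,
`∫_B f^p w ≤ ∫_{B ∩ B₂} w^{1-λ₁/n} ≤ w(B₂)^{(n-λ₁-λ₂)/n} w(B)^{λ₂/n} |B|^{λ₁/n}`,
and `|B|^{λ₁/n}` is `r_B^{λ₁}` up to the volume of the unit ball, so `f` lies in a fixed multiple
of the unit ball of `M^p(φ)` and `‖χ_{B₂}‖'` dominates a multiple of `∫_{B₂} w^{-ε}`. Hölder in
reverse gives `|B₂|^{1+ε} ≤ w(B₂)^ε ∫_{B₂} w^{-ε}`, and testing the Morrey norm on `B₁` gives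
`‖χ_{B₂}‖ ≥ (w(B₁)/φ(B₁))^{1/p}`. Inserting both into `‖χ_{B₂}‖ ‖χ_{B₂}‖' ≤ A |B₂|` leaves
`(w(B₁)/w(B₂))^{(n-λ₂)/(pn)} ≤ A (|B₁|/|B₂|)^{λ₁/(pn)}`.
-/

open MeasureTheory Metric ENNReal Set

noncomputable section

/-- The Muckenhoupt–Morrey constant `[w]_{A(M^p(φ))}`. -/
def apConst (n : ℕ) (p : ℝ) (φ : En n → ℝ → ℝ≥0∞) (w : En n → ℝ≥0∞) : ℝ≥0∞ :=
  ⨆ (c : En n) (r : ℝ) (_ : 0 < r),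
    morreyNorm n p φ w (chiB c r) * kotheNorm n p φ w (chiB c r) / volume (ball c r)

theorem ENNReal.rpow_mul_rpow_le_rpow_add (x : ℝ≥0∞) (y z : ℝ) : x ^ y * x ^ z ≤ x ^ (y + z) := by
  rcases eq_or_ne x 0 with rfl | h0
  · rcases lt_trichotomy y 0 with hy | rfl | hy <;> rcases lt_trichotomy z 0 with hz | rfl | hz <;>
      simp [ENNReal.zero_rpow_of_neg, ENNReal.zero_rpow_of_pos, *, add_neg, add_pos]
  rcases eq_or_ne x ⊤ with rfl | ht
  · rcases lt_trichotomy y 0 with hy | rfl | hy <;> rcases lt_trichotomy z 0 with hz | rfl | hz <;>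
      simp [ENNReal.top_rpow_of_neg, ENNReal.top_rpow_of_pos, *, add_neg, add_pos]
  exact (ENNReal.rpow_add y z h0 ht).ge

theorem ENNReal.div_rpow_le_mul_div_rpow {a b c d A : ℝ≥0∞} {σ ε : ℝ} (hσ : 0 ≤ σ) (hε : 0 ≤ ε)
    (hb0 : b ≠ 0) (hbt : b ≠ ⊤) (hd0 : d ≠ 0) (hdt : d ≠ ⊤)
    (h : a ^ σ * d ^ ε ≤ A * b ^ σ * c ^ ε) : (a / b) ^ σ ≤ A * (c / d) ^ ε := by
  have hdε0 : d ^ ε ≠ 0 := (ENNReal.rpow_pos (pos_iff_ne_zero.2 hd0) hdt).ne'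
  have hbσ0 : b ^ σ ≠ 0 := (ENNReal.rpow_pos (pos_iff_ne_zero.2 hb0) hbt).ne'
  calc (a / b) ^ σ = a ^ σ * d ^ ε / (b ^ σ * d ^ ε) := by
        rw [ENNReal.mul_div_mul_right _ _ hdε0 (ENNReal.rpow_ne_top_of_nonneg hε hdt),
          ENNReal.div_rpow_of_nonneg _ _ hσ]
    _ ≤ A * b ^ σ * c ^ ε / (b ^ σ * d ^ ε) := ENNReal.div_le_div_right h _
    _ = A * (c / d) ^ ε := by
        rw [mul_comm A, mul_assoc, ENNReal.mul_div_mul_left _ _ hbσ0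
          (ENNReal.rpow_ne_top_of_nonneg hσ hbt), ENNReal.div_rpow_of_nonneg _ _ hε, mul_div_assoc]

theorem ENNReal.le_rpow_inv_mul_mul_rpow_div_of_div_rpow_le {a b c x : ℝ≥0∞} {σ δ : ℝ}
    (hσ : 0 < σ) (hb0 : b ≠ 0) (hbt : b ≠ ⊤) (h : (a / b) ^ σ ≤ c * x ^ δ) :
    a ≤ c ^ σ⁻¹ * b * x ^ (δ / σ) := by
  have hab : a / b ≤ c ^ σ⁻¹ * x ^ (δ / σ) := by
    rw [div_eq_mul_inv δ, ENNReal.rpow_mul, ← ENNReal.mul_rpow_of_nonneg _ _ (inv_nonneg.2 hσ.le)]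
    exact (ENNReal.le_rpow_inv_iff hσ).2 h
  rw [ENNReal.div_le_iff hb0 hbt] at hab
  calc a ≤ c ^ σ⁻¹ * x ^ (δ / σ) * b := hab
    _ = c ^ σ⁻¹ * b * x ^ (δ / σ) := by ring

theorem lintegral_rpow_le_lintegral_rpow_mul_measure_univ {α : Type*} [MeasurableSpace α]
    (μ : Measure α) {w : α → ℝ≥0∞} (hw : AEMeasurable w μ) {a : ℝ} (ha : 0 ≤ a) (ha1 : a ≤ 1) :
    ∫⁻ x, w x ^ a ∂μ ≤ (∫⁻ x, w x ∂μ) ^ a * μ univ ^ (1 - a) := by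
  rcases ha.eq_or_lt with rfl | ha
  · simp
  rcases ha1.eq_or_lt with rfl | ha1
  · simp
  have hpq : (1 / a).HolderConjugate (1 / (1 - a)) :=
    Real.holderConjugate_one_div ha (by linarith) (by ring)
  calc ∫⁻ x, w x ^ a ∂μ = ∫⁻ x, w x ^ a * 1 ∂μ := by simp
    _ ≤ (∫⁻ x, (w x ^ a) ^ (1 / a) ∂μ) ^ (1 / (1 / a)) *
        (∫⁻ _, (1 : ℝ≥0∞) ^ (1 / (1 - a)) ∂μ) ^ (1 / (1 / (1 - a))) :=
      ENNReal.lintegral_mul_le_Lp_mul_Lq μ hpq (hw.pow_const a) aemeasurable_const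
    _ = (∫⁻ x, w x ∂μ) ^ a * μ univ ^ (1 - a) := by
      simp_rw [← ENNReal.rpow_mul, mul_one_div_cancel ha.ne', ENNReal.rpow_one, one_div_one_div,
        ENNReal.one_rpow, lintegral_one]

theorem measure_univ_rpow_le_lintegral_mul_lintegral_rpow_neg {α : Type*} [MeasurableSpace α]
    (μ : Measure α) {w : α → ℝ≥0∞} (hw : AEMeasurable w μ) (h0 : ∫⁻ x, w x ∂μ ≠ 0)
    (htop : ∫⁻ x, w x ∂μ ≠ ⊤) {ε : ℝ} (hε : 0 ≤ ε) :
    μ univ ^ (1 + ε) ≤ (∫⁻ x, w x ∂μ) ^ ε * ∫⁻ x, w x ^ (-ε) ∂μ := by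
  rcases hε.eq_or_lt with rfl | hε
  · simp
  by_cases hzero : μ {x | w x = 0} = 0
  swap
  · have hinf : ∫⁻ x, w x ^ (-ε) ∂μ = ⊤ := by
      refine lintegral_eq_top_of_measure_eq_top_ne_zero (hw.pow_const _) fun h => hzero ?_
      refine measure_mono_null (fun x (hx : w x = 0) => ?_) h
      simp [hx, hε]
    rw [hinf, ENNReal.mul_top (ENNReal.rpow_pos (pos_iff_ne_zero.2 h0) htop).ne']
    exact le_top
  have hpos : ∀ᵐ x ∂μ, w x ≠ 0 := measure_eq_zero_iff_ae_notMem.1 hzero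
  have hfin : ∀ᵐ x ∂μ, w x ≠ ⊤ := (ae_lt_top' hw htop).mono fun x hx => hx.ne
  set θ := ε / (1 + ε)
  have hpq : ((1 + ε) / ε).HolderConjugate (1 + ε) := by
    refine Real.holderConjugate_iff.mpr ⟨?_, ?_⟩
    · rw [lt_div_iff₀ hε]; linarith
    · field_simp; ring
  have hone : ∫⁻ x, w x ^ θ * w x ^ (-θ) ∂μ = μ univ := by
    rw [← lintegral_one]
    refine lintegral_congr_ae ?_
    filter_upwards [hfin, hpos] with x hx hx0
    rw [← ENNReal.rpow_add _ _ hx0 hx, add_neg_cancel, ENNReal.rpow_zero]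
  have holder := ENNReal.lintegral_mul_le_Lp_mul_Lq μ hpq (hw.pow_const θ) (hw.pow_const (-θ))
  simp only [Pi.mul_apply, hone, ← ENNReal.rpow_mul] at holder
  calc μ univ ^ (1 + ε) ≤ ((∫⁻ x, w x ^ (θ * ((1 + ε) / ε)) ∂μ) ^ (1 / ((1 + ε) / ε)) *
        (∫⁻ x, w x ^ (-θ * (1 + ε)) ∂μ) ^ (1 / (1 + ε))) ^ (1 + ε) := by gcongr
    _ = (∫⁻ x, w x ∂μ) ^ ε * ∫⁻ x, w x ^ (-ε) ∂μ := by
      have h1 : θ * ((1 + ε) / ε) = 1 := by simp only [θ]; field_simp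
      have h2 : -θ * (1 + ε) = -ε := by simp only [θ]; field_simp
      have h3 : 1 / ((1 + ε) / ε) * (1 + ε) = ε := by field_simp
      have h4 : 1 / (1 + ε) * (1 + ε) = 1 := by field_simp
      rw [h1, h2, ENNReal.mul_rpow_of_nonneg _ _ (by linarith), ← ENNReal.rpow_mul,
        ← ENNReal.rpow_mul, h3, h4]
      simp only [ENNReal.rpow_one]

section Morrey

variable {n : ℕ} {p : ℝ} {φ : En n → ℝ → ℝ≥0∞} {w : En n → ℝ≥0∞}

theorem morreyNorm_le_one (hp : 0 < p) {f : En n → ℝ≥0∞}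
    (h : ∀ c r, 0 < r → ∫⁻ x in ball c r, f x ^ p * w x ≤ φ c r) :
    morreyNorm n p φ w f ≤ 1 :=
  iSup₂_le fun c r => iSup_le fun hr =>
    ENNReal.rpow_le_one (ENNReal.div_le_of_le_mul (by simpa using h c r hr)) (by positivity)

theorem lintegral_mul_le_mul_kotheNorm (hp : 0 < p) {f g : En n → ℝ≥0∞} {K : ℝ≥0∞}
    (hK0 : K ≠ 0) (hKt : K ≠ ⊤)
    (h : ∀ c r, 0 < r → ∫⁻ x in ball c r, f x ^ p * w x ≤ K ^ p * φ c r) :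
    ∫⁻ x, f x * g x ≤ K * kotheNorm n p φ w g := by
  have hKp0 : K ^ p ≠ 0 := (ENNReal.rpow_pos (pos_iff_ne_zero.2 hK0) hKt).ne'
  have hKpt : K ^ p ≠ ⊤ := ENNReal.rpow_ne_top_of_nonneg hp.le hKt
  have hnorm : morreyNorm n p φ w (fun x => K⁻¹ * f x) ≤ 1 := by
    refine morreyNorm_le_one hp fun c r hr => ?_
    calc ∫⁻ x in ball c r, (K⁻¹ * f x) ^ p * w x
        = (K ^ p)⁻¹ * ∫⁻ x in ball c r, f x ^ p * w x := by
          rw [← lintegral_const_mul' _ _ (ENNReal.inv_ne_top.2 hKp0)]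
          simp_rw [ENNReal.mul_rpow_of_nonneg _ _ hp.le, ENNReal.inv_rpow, mul_assoc]
      _ ≤ (K ^ p)⁻¹ * (K ^ p * φ c r) := by gcongr; exact h c r hr
      _ = φ c r := ENNReal.inv_mul_cancel_left hKp0 hKpt
  calc ∫⁻ x, f x * g x = K * ∫⁻ x, K⁻¹ * f x * g x := by
        simp_rw [mul_assoc, lintegral_const_mul' _ _ (ENNReal.inv_ne_top.2 hK0),
          ENNReal.mul_inv_cancel_left hK0 hKt]
    _ ≤ K * kotheNorm n p φ w g := by
      gcongr
      exact le_iSup₂_of_le (fun x => K⁻¹ * f x) hnorm le_rfl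

theorem rpow_div_le_morreyNorm_chiB {c₁ c₂ : En n} {r₁ r₂ : ℝ} (hr₁ : 0 < r₁)
    (hsub : ball c₁ r₁ ⊆ ball c₂ r₂) :
    ((∫⁻ x in ball c₁ r₁, w x) / φ c₁ r₁) ^ (1 / p) ≤ morreyNorm n p φ w (chiB c₂ r₂) := by
  have hint : ∫⁻ x in ball c₁ r₁, chiB c₂ r₂ x ^ p * w x = ∫⁻ x in ball c₁ r₁, w x :=
    setLIntegral_congr_fun measurableSet_ball fun x hx => by simp [chiB, hsub hx]
  exact le_iSup₂_of_le c₁ r₁ (le_iSup_of_le hr₁ (by rw [hint]))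

theorem morreyNorm_mul_kotheNorm_le_of_apConst_le {A : ℝ≥0∞} (hA : apConst n p φ w ≤ A)
    (c : En n) {r : ℝ} (hr : 0 < r) :
    morreyNorm n p φ w (chiB c r) * kotheNorm n p φ w (chiB c r) ≤ A * volume (ball c r) := by
  rw [← ENNReal.div_le_iff (measure_ball_pos volume c hr).ne' measure_ball_lt_top.ne]
  refine le_trans ?_ hA
  unfold apConst
  exact le_iSup₂_of_le c r (le_iSup_of_le hr le_rfl)

end Morrey

section PhiKS

variable {n : ℕ} {p lam₁ lam₂ : ℝ} {w : En n → ℝ≥0∞}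

theorem rpow_mul_phiKS (hn : n ≠ 0) (c : En n) {r : ℝ} (hr : 0 < r) :
    volume (ball (0 : En n) 1) ^ (lam₁ / n) * phiKS n lam₁ lam₂ w c r =
      volume (ball c r) ^ (lam₁ / n) * (∫⁻ x in ball c r, w x) ^ (lam₂ / n) := by
  have hr' : ENNReal.ofReal (r ^ n) ^ (lam₁ / n) = ENNReal.ofReal (r ^ lam₁) := by
    rw [ENNReal.ofReal_pow hr.le, ← ENNReal.rpow_natCast, ← ENNReal.rpow_mul,
      mul_div_cancel₀ _ (Nat.cast_ne_zero.2 hn), ENNReal.ofReal_rpow_of_pos hr]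
  rw [phiKS, Measure.addHaar_ball_of_pos volume c hr, finrank_euclideanSpace_fin,
    ENNReal.mul_rpow_of_ne_top (by simp) measure_ball_lt_top.ne, hr']
  ring

theorem setLIntegral_indicator_rpow_neg_le (hp : 0 < p) (hn : n ≠ 0) (h1 : 0 ≤ lam₁)
    (h2 : 0 ≤ lam₂) (hsum : lam₁ + lam₂ ≤ n) (hw : Measurable w) (c₂ : En n) (r₂ : ℝ)
    (c : En n) {r : ℝ} (hr : 0 < r) :
    ∫⁻ x in ball c r, (ball c₂ r₂).indicator (fun y => w y ^ (-(lam₁ / (p * n)))) x ^ p * w x ≤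
      (∫⁻ x in ball c₂ r₂, w x) ^ ((n - lam₁ - lam₂) / n) *
        (volume (ball (0 : En n) 1) ^ (lam₁ / n) * phiKS n lam₁ lam₂ w c r) := by
  have hn' : (0 : ℝ) < n := Nat.cast_pos.2 (Nat.pos_of_ne_zero hn)
  have hpt : ∀ x, (ball c₂ r₂).indicator (fun y => w y ^ (-(lam₁ / (p * n)))) x ^ p * w x ≤
      (ball c₂ r₂).indicator (fun y => w y ^ (1 - lam₁ / n)) x := by
    intro x
    by_cases hx : x ∈ ball c₂ r₂
    · have hexp : -(lam₁ / (p * n)) * p = -(lam₁ / n) := by field_simp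
      simp only [indicator_of_mem hx, ← ENNReal.rpow_mul, hexp]
      calc w x ^ (-(lam₁ / n)) * w x = w x ^ (-(lam₁ / n)) * w x ^ (1 : ℝ) := by
            rw [ENNReal.rpow_one]
        _ ≤ w x ^ (1 - lam₁ / n) := by
          rw [sub_eq_neg_add]; exact ENNReal.rpow_mul_rpow_le_rpow_add _ _ _
    · simp [hx, ENNReal.zero_rpow_of_pos hp]
  set S := ball c₂ r₂ ∩ ball c r
  have hsplit : 1 - lam₁ / n = (n - lam₁ - lam₂) / n + lam₂ / n := by field_simp; ring
  calc ∫⁻ x in ball c r, (ball c₂ r₂).indicator (fun y => w y ^ (-(lam₁ / (p * n)))) x ^ p * w x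
      ≤ ∫⁻ x in ball c r, (ball c₂ r₂).indicator (fun y => w y ^ (1 - lam₁ / n)) x :=
        lintegral_mono hpt
    _ = ∫⁻ x in S, w x ^ (1 - lam₁ / n) := by
        rw [lintegral_indicator measurableSet_ball, Measure.restrict_restrict measurableSet_ball]
    _ ≤ (∫⁻ x in S, w x) ^ (1 - lam₁ / n) * volume S ^ (lam₁ / n) := by
        refine (lintegral_rpow_le_lintegral_rpow_mul_measure_univ _ hw.aemeasurable
          (by rw [sub_nonneg, div_le_one hn']; linarith)
          (by linarith [div_nonneg h1 hn'.le])).trans_eq ?_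
        rw [Measure.restrict_apply_univ, _root_.sub_sub_cancel]
    _ = (∫⁻ x in S, w x) ^ ((n - lam₁ - lam₂) / n) * (∫⁻ x in S, w x) ^ (lam₂ / n) *
          volume S ^ (lam₁ / n) := by
        rw [hsplit, ENNReal.rpow_add_of_nonneg _ _ (div_nonneg (by linarith) hn'.le)
          (div_nonneg h2 hn'.le)]
    _ ≤ (∫⁻ x in ball c₂ r₂, w x) ^ ((n - lam₁ - lam₂) / n) *
          (∫⁻ x in ball c r, w x) ^ (lam₂ / n) * volume (ball c r) ^ (lam₁ / n) := by
        gcongr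
        all_goals first
          | exact inter_subset_left
          | exact inter_subset_right
          | exact div_nonneg (by linarith) hn'.le
    _ = _ := by rw [rpow_mul_phiKS hn c hr]; ring

theorem rpow_div_phiKS_mul_volume_ball_rpow (hp : 0 < p) (hn : n ≠ 0) (h2 : 0 ≤ lam₂)
    (h2' : lam₂ ≤ n) (c : En n) {r : ℝ} (hr : 0 < r) (hW0 : ∫⁻ x in ball c r, w x ≠ 0)
    (hWt : ∫⁻ x in ball c r, w x ≠ ⊤) :
    ((∫⁻ x in ball c r, w x) / phiKS n lam₁ lam₂ w c r) ^ (1 / p) *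
        volume (ball c r) ^ (lam₁ / (p * n)) =
      (∫⁻ x in ball c r, w x) ^ ((n - lam₂) / (p * n)) *
        volume (ball (0 : En n) 1) ^ (lam₁ / (p * n)) := by
  have hn' : (0 : ℝ) < n := Nat.cast_pos.2 (Nat.pos_of_ne_zero hn)
  set W := ∫⁻ x in ball c r, w x
  have hφ := rpow_mul_phiKS (lam₁ := lam₁) (lam₂ := lam₂) (w := w) hn c hr
  have hφ0 : phiKS n lam₁ lam₂ w c r ≠ 0 := by
    rintro h
    rw [h, mul_zero, eq_comm, mul_eq_zero] at hφ
    exact hφ.elim (ENNReal.rpow_pos (measure_ball_pos volume c hr) measure_ball_lt_top.ne).ne'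
      (ENNReal.rpow_pos (pos_iff_ne_zero.2 hW0) hWt).ne'
  have hφt : phiKS n lam₁ lam₂ w c r ≠ ⊤ :=
    ENNReal.mul_ne_top ENNReal.ofReal_ne_top (ENNReal.rpow_ne_top_of_ne_zero hW0 hWt)
  have hsplit : W = W ^ ((n - lam₂) / n) * W ^ (lam₂ / n) := by
    rw [← ENNReal.rpow_add_of_nonneg _ _ (div_nonneg (by linarith) hn'.le) (div_nonneg h2 hn'.le),
      ← add_div, sub_add_cancel, div_self hn'.ne', ENNReal.rpow_one]
  have hpow : W / phiKS n lam₁ lam₂ w c r * volume (ball c r) ^ (lam₁ / n) =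
      W ^ ((n - lam₂) / n) * volume (ball (0 : En n) 1) ^ (lam₁ / n) := by
    rw [div_eq_mul_inv, mul_right_comm, ← div_eq_mul_inv, eq_comm, ENNReal.eq_div_iff hφ0 hφt,
      mul_comm (phiKS _ _ _ _ _ _), mul_assoc, hφ]
    nth_rw 2 [hsplit]
    ring
  have hexp : ∀ a : ℝ, a / (p * n) = a / n * (1 / p) := fun a => by field_simp
  rw [hexp lam₁, hexp (n - lam₂), ENNReal.rpow_mul, ENNReal.rpow_mul, ENNReal.rpow_mul,
    ← ENNReal.mul_rpow_of_nonneg _ _ (by positivity), hpow,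
    ENNReal.mul_rpow_of_nonneg _ _ (by positivity)]

theorem rpow_div_phiKS_mul_lintegral_rpow_neg_le (hp : 0 < p) (hn : n ≠ 0) (h1 : 0 ≤ lam₁)
    (h2 : 0 ≤ lam₂) (hsum : lam₁ + lam₂ ≤ n) (hw : Measurable w) {A : ℝ≥0∞}
    (hA : apConst n p (phiKS n lam₁ lam₂ w) w ≤ A) {c₁ c₂ : En n} {r₁ r₂ : ℝ}
    (hr₁ : 0 < r₁) (hr₂ : 0 < r₂) (hsub : ball c₁ r₁ ⊆ ball c₂ r₂)
    (hW0 : ∫⁻ x in ball c₂ r₂, w x ≠ 0) (hWt : ∫⁻ x in ball c₂ r₂, w x ≠ ⊤) :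
    ((∫⁻ x in ball c₁ r₁, w x) / phiKS n lam₁ lam₂ w c₁ r₁) ^ (1 / p) *
        ∫⁻ x in ball c₂ r₂, w x ^ (-(lam₁ / (p * n))) ≤
      (∫⁻ x in ball c₂ r₂, w x) ^ ((n - lam₁ - lam₂) / (p * n)) *
        volume (ball (0 : En n) 1) ^ (lam₁ / (p * n)) * (A * volume (ball c₂ r₂)) := by
  set φ := phiKS n lam₁ lam₂ w
  set v := volume (ball (0 : En n) 1)
  set K := (∫⁻ x in ball c₂ r₂, w x) ^ ((n - lam₁ - lam₂) / (p * n)) * v ^ (lam₁ / (p * n))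
  have hv0 : v ≠ 0 := (measure_ball_pos volume _ one_pos).ne'
  have hvt : v ≠ ⊤ := measure_ball_lt_top.ne
  have hK0 : K ≠ 0 := mul_ne_zero (ENNReal.rpow_pos (pos_iff_ne_zero.2 hW0) hWt).ne'
    (ENNReal.rpow_pos (pos_iff_ne_zero.2 hv0) hvt).ne'
  have hKt : K ≠ ⊤ := ENNReal.mul_ne_top (ENNReal.rpow_ne_top_of_ne_zero hW0 hWt)
    (ENNReal.rpow_ne_top_of_ne_zero hv0 hvt)
  have hK : K ^ p = (∫⁻ x in ball c₂ r₂, w x) ^ ((n - lam₁ - lam₂) / n) * v ^ (lam₁ / n) := by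
    have hexp : ∀ a : ℝ, a / (p * n) * p = a / n := fun a => by field_simp
    rw [ENNReal.mul_rpow_of_nonneg _ _ hp.le, ← ENNReal.rpow_mul, ← ENNReal.rpow_mul, hexp, hexp]
  have hkothe : ∫⁻ x in ball c₂ r₂, w x ^ (-(lam₁ / (p * n))) ≤
      K * kotheNorm n p φ w (chiB c₂ r₂) := by
    refine le_of_eq_of_le ?_ (lintegral_mul_le_mul_kotheNorm hp hK0 hKt
      (f := (ball c₂ r₂).indicator fun y => w y ^ (-(lam₁ / (p * n)))) fun c r hr => ?_)
    · rw [← lintegral_indicator measurableSet_ball]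
      refine lintegral_congr fun x => ?_
      by_cases hx : x ∈ ball c₂ r₂ <;> simp [chiB, hx]
    · rw [hK, mul_assoc]
      exact setLIntegral_indicator_rpow_neg_le hp hn h1 h2 hsum hw c₂ r₂ c hr
  calc ((∫⁻ x in ball c₁ r₁, w x) / φ c₁ r₁) ^ (1 / p) *
        ∫⁻ x in ball c₂ r₂, w x ^ (-(lam₁ / (p * n)))
      ≤ morreyNorm n p φ w (chiB c₂ r₂) * (K * kotheNorm n p φ w (chiB c₂ r₂)) :=
        mul_le_mul' (rpow_div_le_morreyNorm_chiB hr₁ hsub) hkothe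
    _ = K * (morreyNorm n p φ w (chiB c₂ r₂) * kotheNorm n p φ w (chiB c₂ r₂)) := by ring
    _ ≤ K * (A * volume (ball c₂ r₂)) :=
        mul_le_mul_right (morreyNorm_mul_kotheNorm_le_of_apConst_le hA c₂ hr₂) K

theorem div_rpow_le_of_apConst_le (hp : 0 < p) (h1 : 0 ≤ lam₁) (h2 : 0 ≤ lam₂)
    (hsum : lam₁ + lam₂ < n) (hw : Measurable w) {A : ℝ≥0∞}
    (hA : apConst n p (phiKS n lam₁ lam₂ w) w ≤ A) {c₁ c₂ : En n} {r₁ r₂ : ℝ}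
    (hr₁ : 0 < r₁) (hr₂ : 0 < r₂) (hsub : ball c₁ r₁ ⊆ ball c₂ r₂)
    (hW₁ : ∫⁻ x in ball c₁ r₁, w x ≠ 0) (hW₂ : ∫⁻ x in ball c₂ r₂, w x ≠ ⊤) :
    ((∫⁻ x in ball c₁ r₁, w x) / ∫⁻ x in ball c₂ r₂, w x) ^ ((n - lam₂) / (p * n)) ≤
      A * (volume (ball c₁ r₁) / volume (ball c₂ r₂)) ^ (lam₁ / (p * n)) := by
  have hn : n ≠ 0 := by rintro rfl; norm_num at hsum; linarith
  set W₁ := ∫⁻ x in ball c₁ r₁, w x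
  set W₂ := ∫⁻ x in ball c₂ r₂, w x
  set V₁ := volume (ball c₁ r₁)
  set V₂ := volume (ball c₂ r₂)
  set v := volume (ball (0 : En n) 1)
  set X := (W₁ / phiKS n lam₁ lam₂ w c₁ r₁) ^ (1 / p)
  set L := ∫⁻ x in ball c₂ r₂, w x ^ (-(lam₁ / (p * n)))
  set ε := lam₁ / (p * n)
  set σ := (n - lam₂) / (p * n)
  have hε : 0 ≤ ε := by positivity
  have hW₂0 : W₂ ≠ 0 := fun h => hW₁ (le_antisymm (h ▸ lintegral_mono_set hsub) bot_le)
  have hW₁t : W₁ ≠ ⊤ := ne_top_of_le_ne_top hW₂ (lintegral_mono_set hsub)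
  have hV₂0 : V₂ ≠ 0 := (measure_ball_pos volume c₂ hr₂).ne'
  have hV₂t : V₂ ≠ ⊤ := measure_ball_lt_top.ne
  have hdual : X * L ≤ W₂ ^ ((n - lam₁ - lam₂) / (p * n)) * v ^ ε * (A * V₂) :=
    rpow_div_phiKS_mul_lintegral_rpow_neg_le hp hn h1 h2 hsum.le hw hA hr₁ hr₂ hsub hW₂0 hW₂
  have hjensen : V₂ ^ (1 + ε) ≤ W₂ ^ ε * L := by
    simpa only [Measure.restrict_apply_univ] using
      measure_univ_rpow_le_lintegral_mul_lintegral_rpow_neg _ hw.aemeasurable hW₂0 hW₂ hε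
  have hX : X * V₁ ^ ε = W₁ ^ σ * v ^ ε :=
    rpow_div_phiKS_mul_volume_ball_rpow hp hn h2 (by linarith) c₁ hr₁ hW₁ hW₁t
  have hσ : ε + (n - lam₁ - lam₂) / (p * n) = σ := by ring
  have key : W₁ ^ σ * V₂ ^ ε * (v ^ ε * V₂) ≤ A * W₂ ^ σ * V₁ ^ ε * (v ^ ε * V₂) :=
    calc W₁ ^ σ * V₂ ^ ε * (v ^ ε * V₂) = X * V₁ ^ ε * V₂ ^ (1 + ε) := by
          rw [hX, ENNReal.rpow_add_of_nonneg _ _ zero_le_one hε, ENNReal.rpow_one]; ring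
      _ ≤ X * V₁ ^ ε * (W₂ ^ ε * L) := by gcongr
      _ = V₁ ^ ε * W₂ ^ ε * (X * L) := by ring
      _ ≤ V₁ ^ ε * W₂ ^ ε * (W₂ ^ ((n - lam₁ - lam₂) / (p * n)) * v ^ ε * (A * V₂)) := by
          gcongr
      _ = A * W₂ ^ σ * V₁ ^ ε * (v ^ ε * V₂) := by
          rw [← hσ, ENNReal.rpow_add_of_nonneg _ _ hε
            (div_nonneg (by linarith) (by positivity))]
          ring
  have hv0 : v ^ ε * V₂ ≠ 0 := mul_ne_zero
    (ENNReal.rpow_pos (measure_ball_pos volume _ one_pos) measure_ball_lt_top.ne).ne' hV₂0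
  have hvt : v ^ ε * V₂ ≠ ⊤ :=
    ENNReal.mul_ne_top (ENNReal.rpow_ne_top_of_nonneg hε measure_ball_lt_top.ne) hV₂t
  exact ENNReal.div_rpow_le_mul_div_rpow (div_nonneg (by linarith) (by positivity)) hε hW₂0 hW₂
    hV₂0 hV₂t ((ENNReal.mul_le_mul_iff_left hv0 hvt).1 key)

end PhiKS

theorem stmt15_general {n : ℕ} (p lam₁ lam₂ : ℝ) (hp : 1 ≤ p)
    (h1 : 0 ≤ lam₁) (h2 : 0 ≤ lam₂)
    (hsum : lam₁ + lam₂ < n) :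
    ∀ A : ℝ≥0∞, A ≠ ⊤ → ∃ C : ℝ≥0∞, C ≠ ⊤ ∧
      ∀ w : En n → ℝ≥0∞, Measurable w →
        apConst n p (phiKS n lam₁ lam₂ w) w ≤ A →
        ∀ (c₁ : En n) (r₁ : ℝ) (c₂ : En n) (r₂ : ℝ), 0 < r₁ → 0 < r₂ →
          ball c₁ r₁ ⊆ ball c₂ r₂ →
          (∫⁻ x in ball c₁ r₁, w x) ≤ C * (∫⁻ x in ball c₂ r₂, w x) *
            (volume (ball c₁ r₁) / volume (ball c₂ r₂)) ^ (lam₁ / ((n : ℝ) - lam₂)) := by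
  intro A hA
  have hp0 : 0 < p := by linarith
  have hpn : 0 < p * n := mul_pos hp0 (by linarith)
  -- `A + 1` rather than `A`: the case `w(B₂) = ∞` below needs `C ≠ 0`.
  have hA1 : A + 1 ≠ ⊤ := by simpa using hA
  refine ⟨(A + 1) ^ (p * n / (n - lam₂)),
    ENNReal.rpow_ne_top_of_nonneg (div_nonneg hpn.le (by linarith)) hA1, ?_⟩
  intro w hw hAw c₁ r₁ c₂ r₂ hr₁ hr₂ hsub
  rcases eq_or_ne (∫⁻ x in ball c₁ r₁, w x) 0 with hW₁ | hW₁
  · simp [hW₁]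
  rcases eq_or_ne (∫⁻ x in ball c₂ r₂, w x) ⊤ with hW₂ | hW₂
  · have hC : (A + 1) ^ (p * n / (n - lam₂)) ≠ 0 := (ENNReal.rpow_pos (by simp) hA1).ne'
    have hV : (volume (ball c₁ r₁) / volume (ball c₂ r₂)) ^ (lam₁ / ((n : ℝ) - lam₂)) ≠ 0 :=
      (ENNReal.rpow_pos
        (ENNReal.div_pos (measure_ball_pos volume c₁ hr₁).ne' measure_ball_lt_top.ne)
        (ENNReal.div_ne_top measure_ball_lt_top.ne (measure_ball_pos volume c₂ hr₂).ne')).ne'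
    rw [hW₂, ENNReal.mul_top hC, ENNReal.top_mul hV]
    exact le_top
  have hW₂0 : ∫⁻ x in ball c₂ r₂, w x ≠ 0 :=
    (pos_iff_ne_zero.2 hW₁ |>.trans_le (lintegral_mono_set hsub)).ne'
  have key := ENNReal.le_rpow_inv_mul_mul_rpow_div_of_div_rpow_le (div_pos (by linarith) hpn)
    hW₂0 hW₂ (div_rpow_le_of_apConst_le hp0 h1 h2 hsum hw (hAw.trans (le_self_add : A ≤ A + 1))
      hr₁ hr₂ hsub hW₁ hW₂)
  rwa [inv_div, div_div_div_cancel_right₀ hpn.ne'] at key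

/-- if `w ∈ A(M^p(φ))` with `φ(B) = r_B^{λ₁} w(B)^{λ₂/n}`, then `w` is
reverse doubling with exponent `λ₁/(n-λ₂)`, with a constant depending only on
`[w]_{A(M^p(φ))}`, `n`, `p`, `λ₁`, `λ₂`. -/
theorem stmt15 {n : ℕ} (p lam₁ lam₂ : ℝ) (hp : 1 ≤ p)
    (h1 : 0 ≤ lam₁) (h1' : lam₁ < n) (h2 : 0 ≤ lam₂) (h2' : lam₂ < n)
    (hsum0 : 0 < lam₁ + lam₂) (hsum : lam₁ + lam₂ < n) :
    ∀ A : ℝ≥0∞, A ≠ ⊤ → ∃ C : ℝ≥0∞, C ≠ ⊤ ∧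
      ∀ w : En n → ℝ≥0∞, Measurable w →
        apConst n p (phiKS n lam₁ lam₂ w) w ≤ A →
        ∀ (c₁ : En n) (r₁ : ℝ) (c₂ : En n) (r₂ : ℝ), 0 < r₁ → 0 < r₂ →
          ball c₁ r₁ ⊆ ball c₂ r₂ →
          (∫⁻ x in ball c₁ r₁, w x) ≤ C * (∫⁻ x in ball c₂ r₂, w x) *
            (volume (ball c₁ r₁) / volume (ball c₂ r₂)) ^ (lam₁ / ((n : ℝ) - lam₂)) :=
  stmt15_general p lam₁ lam₂ hp h1 h2 hsum
end
end

section
/- Let $1\le p<\infty$, $0\le\lambda_1,\lambda_2<n$, $0<\lambda_1+\lambda_2<n$, $\varphi(B)=r_B^{\lambda_1}w(B)^{\lambda_2/n}$. If $w\in A_p$ and $w$ satisfies the reverse doubling condition with exponent $\lambda_1/(n-\lambda_2)$, then $w\in A(\mathcal M^{p}(\varphi))$, i.e. $\sup_B|B|^{-1}\|\chi_B\|_{\mathcal M^{p}(\varphi,w)}\|\chi_B\|_{\mathcal M^{p}(\varphi,w)'}<\infty$. -/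
open MeasureTheory Metric ENNReal Set

noncomputable section

namespace Stmt18

variable {n : ℕ}



lemma nontriv (hn : 0 < n) : Nontrivial (En n) :=
  Module.nontrivial_of_finrank_pos (R := ℝ) (by rw [finrank_euclideanSpace_fin]; exact hn)

lemma vol_ball (hn : 0 < n) (c : En n) {r : ℝ} (hr : 0 ≤ r) :
    volume (ball c r) = ENNReal.ofReal (r ^ n) * volume (ball (0 : En n) 1) := by
  haveI := nontriv hn
  simpa [finrank_euclideanSpace_fin] using
    Measure.addHaar_ball (volume : Measure (En n)) c hr

lemma vol_ratio (hn : 0 < n) (c c' : En n) {r r' : ℝ} (hr : 0 < r) (hr' : 0 < r') :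
    volume (ball c r) / volume (ball c' r') = ENNReal.ofReal ((r / r') ^ n) := by
  rw [vol_ball hn c hr.le, vol_ball hn c' hr'.le,
    ENNReal.mul_div_mul_right _ _ (measure_ball_pos volume _ one_pos).ne'
      measure_ball_lt_top.ne, div_pow, ENNReal.ofReal_div_of_pos (pow_pos hr' n)]

lemma chiB_num {p : ℝ} (hp : 0 < p) (w : En n → ℝ≥0∞) (c : En n) (r : ℝ) (c' : En n) (r' : ℝ) :
    ∫⁻ x in ball c' r', chiB c r x ^ p * w x = ∫⁻ x in ball c r ∩ ball c' r', w x := by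
  have h : ∀ x, chiB c r x ^ p * w x = (ball c r).indicator w x := by
    intro x
    by_cases hx : x ∈ ball c r
    · simp [chiB, indicator_of_mem hx]
    · simp [chiB, indicator_of_notMem hx, ENNReal.zero_rpow_of_pos hp]
  simp_rw [h]
  rw [lintegral_indicator measurableSet_ball, Measure.restrict_restrict measurableSet_ball]

lemma morrey_le {p : ℝ} (hp : 0 < p) (φ : En n → ℝ → ℝ≥0∞) (w f : En n → ℝ≥0∞)
    (h : morreyNorm n p φ w f ≤ 1) {c' : En n} {r' : ℝ} (hr' : 0 < r') :
    ∫⁻ x in ball c' r', f x ^ p * w x ≤ φ c' r' := by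
  have h1 : ((∫⁻ x in ball c' r', f x ^ p * w x) / φ c' r') ^ (1 / p) ≤ 1 := by
    refine le_trans ?_ h
    unfold morreyNorm
    apply le_iSup_of_le c'
    apply le_iSup_of_le r'
    exact le_iSup_of_le hr' le_rfl
  have h2 : (∫⁻ x in ball c' r', f x ^ p * w x) / φ c' r' ≤ 1 := by
    have h3 := ENNReal.rpow_le_rpow h1 hp.le
    rwa [← ENNReal.rpow_mul, one_div_mul_cancel hp.ne', ENNReal.rpow_one, ENNReal.one_rpow] at h3
  have h4 := (ENNReal.div_le_iff_le_mul (Or.inr (by simp)) (Or.inr one_ne_zero)).1 h2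
  simpa using h4

lemma ball_sub3 {c c' : En n} {r r' : ℝ} (hrr' : r ≤ r')
    (hint : (ball c r ∩ ball c' r').Nonempty) : ball c r ⊆ ball c' (3 * r') := by
  obtain ⟨x₀, hx₁, hx₂⟩ := hint
  rw [mem_ball] at hx₁ hx₂
  intro y hy
  rw [mem_ball] at hy ⊢
  have t1 := dist_triangle y c c'
  have t2 := dist_triangle c x₀ c'
  have t3 : dist c x₀ = dist x₀ c := dist_comm _ _
  linarith

lemma null_on_balls {S : Set (En n)} (R₀ : ℝ)
    (h : ∀ m : ℕ, volume (S ∩ ball (0 : En n) (R₀ + m + 1)) = 0) : volume S = 0 := by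
  refine measure_mono_null (fun x hx => ?_) (measure_iUnion_null h)
  refine mem_iUnion.2 ⟨⌈‖x‖ - R₀⌉₊, hx, ?_⟩
  rw [mem_ball, dist_zero_right]
  have h1 := Nat.le_ceil (‖x‖ - R₀)
  linarith

lemma null_of_setLintegral_top (v : En n → ℝ≥0∞) {s t : Set (En n)}
    (hts : t ⊆ s) (htm : MeasurableSet t) (hval : ∀ x ∈ t, v x = ⊤)
    (hfin : (∫⁻ x in s, v x) ≠ ⊤) : volume t = 0 := by
  by_contra h
  apply hfin
  have h1 : (∫⁻ x in t, v x) = ⊤ := by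
    rw [setLIntegral_congr_fun htm hval,
      setLIntegral_const, ENNReal.top_mul h]
  have h2 := lintegral_mono_set (μ := volume) (f := v) hts
  rw [h1] at h2
  exact top_le_iff.1 h2


lemma exp_conj {p : ℝ} (hp : 1 < p) : -(1/p) * p.conjExponent = 1/(1-p) := by
  rw [Real.conjExponent]
  have hp0 : p ≠ 0 := by positivity
  have h1 : p - 1 ≠ 0 := sub_ne_zero.2 (ne_of_gt hp)
  have h2 : (1:ℝ) - p ≠ 0 := sub_ne_zero.2 (ne_of_lt hp)
  field_simp
  ring

lemma one_div_conj {p : ℝ} (hp : 1 < p) : 1 / p.conjExponent = 1 - 1/p := by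
  have h := (Real.HolderConjugate.conjExponent hp).inv_add_inv_eq_one
  rw [one_div, one_div]
  linarith

lemma ae_ne_of_null {v : En n → ℝ≥0∞} {a : ℝ≥0∞} (hv : Measurable v) {s : Set (En n)}
    (h : volume ({x | v x = a} ∩ s) = 0) : ∀ᵐ x ∂(volume.restrict s), v x ≠ a := by
  rw [ae_iff, Measure.restrict_apply (by
    simp only [ne_eq, not_not]
    exact hv (measurableSet_singleton a))]
  simpa only [ne_eq, not_not] using h

lemma holder_set {p : ℝ} (hp : 1 < p) (w g : En n → ℝ≥0∞) (hw : Measurable w) (hgm : Measurable g)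
    {s : Set (En n)}
    (h0 : volume ({x | w x = 0} ∩ s) = 0) (ht : volume ({x | w x = ⊤} ∩ s) = 0) :
    ∫⁻ x in s, g x ≤
      (∫⁻ x in s, g x ^ p * w x) ^ (1/p) * (∫⁻ x in s, w x ^ (1/(1-p))) ^ (1 - 1/p) := by
  have hp0 : (0:ℝ) < p := lt_trans one_pos hp
  have hq := Real.HolderConjugate.conjExponent hp
  have hae : ∀ᵐ x ∂(volume.restrict s),
      g x ≤ (g x * w x ^ (1/p)) * w x ^ (-(1/p)) := by
    filter_upwards [ae_ne_of_null hw h0, ae_ne_of_null hw ht] with x hx0 hxt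
    rw [mul_assoc, ← ENNReal.rpow_add _ _ hx0 hxt]
    simp
  calc ∫⁻ x in s, g x
      ≤ ∫⁻ x in s, (g x * w x ^ (1/p)) * w x ^ (-(1/p)) := lintegral_mono_ae hae
    _ ≤ (∫⁻ x in s, (g x * w x ^ (1/p)) ^ p) ^ (1/p) *
          (∫⁻ x in s, (w x ^ (-(1/p))) ^ p.conjExponent) ^ (1/p.conjExponent) :=
        ENNReal.lintegral_mul_le_Lp_mul_Lq _ hq
          ((hgm.mul (hw.pow_const _)).aemeasurable) ((hw.pow_const _).aemeasurable)
    _ = (∫⁻ x in s, g x ^ p * w x) ^ (1/p) * (∫⁻ x in s, w x ^ (1/(1-p))) ^ (1 - 1/p) := by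
        rw [one_div_conj hp]
        congr 1
        · congr 1
          apply lintegral_congr fun x => ?_
          rw [ENNReal.mul_rpow_of_nonneg _ _ hp0.le, ← ENNReal.rpow_mul,
            one_div_mul_cancel hp0.ne', ENNReal.rpow_one]
        · congr 1
          apply lintegral_congr fun x => ?_
          rw [← ENNReal.rpow_mul, exp_conj hp]

lemma L1_one (w : En n → ℝ≥0∞) (C : ℝ≥0∞)
    (hap : ∀ (c : En n) (r : ℝ), 0 < r →
      (∫⁻ x in ball c r, w x) ≤ C * essInf w (volume.restrict (ball c r)) * volume (ball c r))
    (c : En n) (r : ℝ) (c' : En n) (r' : ℝ) (hr : 0 < r) (hr' : 0 < r')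
    (hsub : ball c' r' ⊆ ball c r) :
    (∫⁻ x in ball c r, w x) ≤
      C * (volume (ball c r) / volume (ball c' r')) ^ (1:ℝ) * (∫⁻ x in ball c' r', w x) := by
  have hVS0 : volume (ball c' r') ≠ 0 := (measure_ball_pos volume _ hr').ne'
  have hVSt : volume (ball c' r') ≠ ⊤ := measure_ball_lt_top.ne
  have h1 : essInf w (volume.restrict (ball c r)) ≤ essInf w (volume.restrict (ball c' r')) :=
    essInf_antitone_measure (Measure.absolutelyContinuous_of_le (Measure.restrict_mono hsub le_rfl))
  have h2 : essInf w (volume.restrict (ball c' r')) * volume (ball c' r')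
      ≤ ∫⁻ x in ball c' r', w x := by
    calc essInf w (volume.restrict (ball c' r')) * volume (ball c' r')
        = ∫⁻ _ in ball c' r', essInf w (volume.restrict (ball c' r')) :=
          (setLIntegral_const _ _).symm
      _ ≤ ∫⁻ x in ball c' r', w x := lintegral_mono_ae ae_essInf_le
  have h3 : essInf w (volume.restrict (ball c r)) ≤ (∫⁻ x in ball c' r', w x) / volume (ball c' r') :=
    (ENNReal.le_div_iff_mul_le (Or.inl hVS0) (Or.inl hVSt)).2 (le_trans (mul_le_mul' h1 le_rfl) h2)
  calc (∫⁻ x in ball c r, w x)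
      ≤ C * essInf w (volume.restrict (ball c r)) * volume (ball c r) := hap c r hr
    _ ≤ C * ((∫⁻ x in ball c' r', w x) / volume (ball c' r')) * volume (ball c r) := by gcongr
    _ = C * (volume (ball c r) / volume (ball c' r')) ^ (1:ℝ) * (∫⁻ x in ball c' r', w x) := by
        rw [ENNReal.rpow_one, div_eq_mul_inv, div_eq_mul_inv]; ring

lemma L1_gt {p : ℝ} (hp : 1 < p) (w : En n → ℝ≥0∞) (hw : Measurable w) (C : ℝ≥0∞) (hC : C ≠ ⊤)
    (hap : ∀ (c : En n) (r : ℝ), 0 < r →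
      (∫⁻ x in ball c r, w x) ^ (1 / p) *
          (∫⁻ x in ball c r, w x ^ (1 / (1 - p))) ^ (1 - 1 / p) ≤ C * volume (ball c r))
    (c : En n) (r : ℝ) (c' : En n) (r' : ℝ) (hr : 0 < r) (hr' : 0 < r')
    (hsub : ball c' r' ⊆ ball c r) (hWt : (∫⁻ x in ball c r, w x) ≠ ⊤) :
    (∫⁻ x in ball c r, w x) ≤
      C ^ p * (volume (ball c r) / volume (ball c' r')) ^ p * (∫⁻ x in ball c' r', w x) := by
  have hp0 : (0:ℝ) < p := lt_trans one_pos hp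
  set W := ∫⁻ x in ball c r, w x with hWdef
  set J := ∫⁻ x in ball c r, w x ^ (1/(1-p)) with hJdef
  by_cases hJt : J = ⊤
  · have h0 := hap c r hr
    have hJ' : J ^ (1-1/p) = ⊤ := by
      rw [hJt]; exact ENNReal.top_rpow_of_pos (by
        have : 1/p < 1 := by rw [div_lt_one hp0]; exact hp
        linarith)
    have hW0 : W ^ (1/p) = 0 := by
      by_contra hne
      rw [hJ', ENNReal.mul_top hne] at h0
      exact (ENNReal.mul_ne_top hC measure_ball_lt_top.ne) (top_le_iff.1 h0)
    have hW : W = 0 := by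
      rcases ENNReal.rpow_eq_zero_iff.1 hW0 with ⟨h, _⟩ | ⟨_, hneg⟩
      · exact h
      · exact absurd hneg (not_lt.2 (by positivity))
    rw [hW]; exact zero_le
  · have hVS0 : volume (ball c' r') ≠ 0 := (measure_ball_pos volume _ hr').ne'
    have hVSt : volume (ball c' r') ≠ ⊤ := measure_ball_lt_top.ne
    have h0null : volume ({x | w x = 0} ∩ ball c' r') = 0 := by
      refine measure_mono_null (inter_subset_inter_right _ hsub) ?_
      refine null_of_setLintegral_top (fun x => w x ^ (1/(1-p)))
        inter_subset_right (((hw (measurableSet_singleton 0))).inter measurableSet_ball)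
        (fun x hx => ?_) hJt
      show w x ^ (1 / (1 - p)) = ⊤
      rw [hx.1, ENNReal.zero_rpow_of_neg (by
        have : (1:ℝ) - p < 0 := by linarith
        exact one_div_neg.2 this)]
    have htnull : volume ({x | w x = ⊤} ∩ ball c' r') = 0 := by
      refine measure_mono_null (inter_subset_inter_right _ hsub) ?_
      exact null_of_setLintegral_top w inter_subset_right
        (((hw (measurableSet_singleton ⊤))).inter measurableSet_ball)
        (fun x hx => hx.1) hWt
    have hS : volume (ball c' r') ≤ (∫⁻ x in ball c' r', w x) ^ (1/p) * J ^ (1-1/p) := by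
      have h1 := holder_set hp w (fun _ => 1) hw measurable_const h0null htnull
      simp only [ENNReal.one_rpow, one_mul] at h1
      calc volume (ball c' r') = ∫⁻ _ in ball c' r', (1:ℝ≥0∞) := by
            rw [setLIntegral_const, one_mul]
        _ ≤ (∫⁻ x in ball c' r', w x) ^ (1/p) * (∫⁻ x in ball c' r', w x ^ (1/(1-p))) ^ (1-1/p) := h1
        _ ≤ (∫⁻ x in ball c' r', w x) ^ (1/p) * J ^ (1-1/p) := by
            gcongr
            · have : 1/p < 1 := by rw [div_lt_one hp0]; exact hp
              linarith
            · exact lintegral_mono_set hsub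
    have h5 : W ^ (1/p) * volume (ball c' r') ≤
        C * volume (ball c r) * (∫⁻ x in ball c' r', w x) ^ (1/p) := by
      calc W ^ (1/p) * volume (ball c' r')
          ≤ W ^ (1/p) * ((∫⁻ x in ball c' r', w x) ^ (1/p) * J ^ (1-1/p)) := by gcongr
        _ = (∫⁻ x in ball c' r', w x) ^ (1/p) * (W ^ (1/p) * J ^ (1-1/p)) := by ring
        _ ≤ (∫⁻ x in ball c' r', w x) ^ (1/p) * (C * volume (ball c r)) :=
            mul_le_mul' le_rfl (hap c r hr)
        _ = C * volume (ball c r) * (∫⁻ x in ball c' r', w x) ^ (1/p) := by ring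
    have h6 : W ^ (1/p) ≤
        C * volume (ball c r) * (∫⁻ x in ball c' r', w x) ^ (1/p) / volume (ball c' r') :=
      (ENNReal.le_div_iff_mul_le (Or.inl hVS0) (Or.inl hVSt)).2 h5
    calc W = (W ^ (1/p)) ^ p := by
          rw [← ENNReal.rpow_mul, one_div_mul_cancel hp0.ne', ENNReal.rpow_one]
      _ ≤ (C * volume (ball c r) * (∫⁻ x in ball c' r', w x) ^ (1/p) / volume (ball c' r')) ^ p :=
          ENNReal.rpow_le_rpow h6 hp0.le
      _ = C ^ p * (volume (ball c r) / volume (ball c' r')) ^ p * (∫⁻ x in ball c' r', w x) := by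
          rw [ENNReal.div_rpow_of_nonneg _ _ hp0.le, ENNReal.mul_rpow_of_nonneg _ _ hp0.le,
            ENNReal.mul_rpow_of_nonneg _ _ hp0.le, ← ENNReal.rpow_mul,
            one_div_mul_cancel hp0.ne', ENNReal.rpow_one,
            ENNReal.div_rpow_of_nonneg _ _ hp0.le, div_eq_mul_inv, div_eq_mul_inv]
          ring

lemma kothe_le {p : ℝ} (hp : 0 < p) (φ : En n → ℝ → ℝ≥0∞) (w : En n → ℝ≥0∞) (c : En n) (r : ℝ)
    (T : ℝ≥0∞)
    (hT : ∀ g : En n → ℝ≥0∞, Measurable g → (∀ x ∉ ball c r, g x = 0) →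
      (∀ (c' : En n) (r' : ℝ), 0 < r' → ∫⁻ x in ball c' r', g x ^ p * w x ≤ φ c' r') →
      ∫⁻ x in ball c r, g x ≤ T) :
    kotheNorm n p φ w (chiB c r) ≤ T := by
  refine iSup_le fun f => iSup_le fun hf => ?_
  obtain ⟨g, hgm, hgle, hgeq⟩ := exists_measurable_le_lintegral_eq volume (fun x => f x * chiB c r x)
  have hchile : ∀ x, chiB c r x ≤ 1 := by
    intro x
    by_cases hx : x ∈ ball c r
    · simp [chiB, indicator_of_mem hx]
    · simp [chiB, indicator_of_notMem hx]
  have hgf : ∀ x, g x ≤ f x := fun x =>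
    le_trans (hgle x) (by
      calc f x * chiB c r x ≤ f x * 1 := mul_le_mul' le_rfl (hchile x)
        _ = f x := mul_one _)
  have hg0 : ∀ x ∉ ball c r, g x = 0 := by
    intro x hx
    refine le_antisymm (le_trans (hgle x) ?_) (zero_le)
    simp [chiB, indicator_of_notMem hx]
  calc ∫⁻ x, f x * chiB c r x = ∫⁻ x, g x := hgeq
    _ = ∫⁻ x in ball c r, g x := by
        rw [← lintegral_indicator measurableSet_ball]
        refine lintegral_congr fun x => ?_
        by_cases hx : x ∈ ball c r
        · rw [indicator_of_mem hx]
        · rw [indicator_of_notMem hx, hg0 x hx]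
    _ ≤ T := by
        refine hT g hgm hg0 fun c' r' hr' => ?_
        refine le_trans ?_ (morrey_le hp φ w f hf hr')
        refine lintegral_mono fun x => ?_
        exact mul_le_mul' (ENNReal.rpow_le_rpow (hgf x) hp.le) le_rfl
lemma K_bound_gt {p lam₁ lam₂ : ℝ} (hp : 1 < p)
    (w : En n → ℝ≥0∞) (hw : Measurable w) (c : En n) (r : ℝ) (hr : 0 < r)
    (hWt : (∫⁻ x in ball c r, w x) ≠ ⊤)
    (hJt : (∫⁻ x in ball c r, w x ^ (1/(1-p))) ≠ ⊤) :
    kotheNorm n p (phiKS n lam₁ lam₂ w) w (chiB c r) ≤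
      (phiKS n lam₁ lam₂ w c r) ^ (1/p) *
        (∫⁻ x in ball c r, w x ^ (1/(1-p))) ^ (1 - 1/p) := by
  have hp0 : (0:ℝ) < p := lt_trans one_pos hp
  refine kothe_le hp0 _ w c r _ fun g hgm hg0 hgcon => ?_
  have h0null : volume ({x | w x = 0} ∩ ball c r) = 0 := by
    refine null_of_setLintegral_top (fun x => w x ^ (1/(1-p)))
      inter_subset_right (((hw (measurableSet_singleton 0))).inter measurableSet_ball)
      (fun x hx => ?_) hJt
    show w x ^ (1 / (1 - p)) = ⊤
    rw [hx.1, ENNReal.zero_rpow_of_neg (one_div_neg.2 (by linarith))]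
  have htnull : volume ({x | w x = ⊤} ∩ ball c r) = 0 :=
    null_of_setLintegral_top w inter_subset_right
      (((hw (measurableSet_singleton ⊤))).inter measurableSet_ball) (fun x hx => hx.1) hWt
  calc ∫⁻ x in ball c r, g x
      ≤ (∫⁻ x in ball c r, g x ^ p * w x) ^ (1/p) *
          (∫⁻ x in ball c r, w x ^ (1/(1-p))) ^ (1 - 1/p) :=
        holder_set hp w g hw hgm h0null htnull
    _ ≤ (phiKS n lam₁ lam₂ w c r) ^ (1/p) *
          (∫⁻ x in ball c r, w x ^ (1/(1-p))) ^ (1 - 1/p) := by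
        have h := hgcon c r hr
        gcongr

lemma K_bound_one {lam₁ lam₂ : ℝ}
    (w : En n → ℝ≥0∞) (c : En n) (r : ℝ) (hr : 0 < r)
    (hm0 : essInf w (volume.restrict (ball c r)) ≠ 0)
    (hmt : essInf w (volume.restrict (ball c r)) ≠ ⊤) :
    kotheNorm n 1 (phiKS n lam₁ lam₂ w) w (chiB c r) ≤
      phiKS n lam₁ lam₂ w c r / essInf w (volume.restrict (ball c r)) := by
  refine kothe_le one_pos _ w c r _ fun g hgm hg0 hgcon => ?_
  have h1 : (∫⁻ x in ball c r, g x) * essInf w (volume.restrict (ball c r)) ≤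
      phiKS n lam₁ lam₂ w c r := by
    calc (∫⁻ x in ball c r, g x) * essInf w (volume.restrict (ball c r))
        = ∫⁻ x in ball c r, g x * essInf w (volume.restrict (ball c r)) :=
          (lintegral_mul_const _ hgm).symm
      _ ≤ ∫⁻ x in ball c r, g x * w x := lintegral_mono_ae (by
          filter_upwards [ae_essInf_le (f := w) (μ := volume.restrict (ball c r))] with x hx
          exact mul_le_mul' le_rfl hx)
      _ = ∫⁻ x in ball c r, g x ^ (1:ℝ) * w x := by
          refine lintegral_congr fun x => ?_
          rw [ENNReal.rpow_one]
      _ ≤ phiKS n lam₁ lam₂ w c r := hgcon c r hr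
  exact (ENNReal.le_div_iff_mul_le (Or.inl hm0) (Or.inl hmt)).2 h1

lemma ae_top_one (w : En n → ℝ≥0∞) (hw : Measurable w) (C : ℝ≥0∞) (hC : C ≠ ⊤)
    (hap : ∀ (c : En n) (r : ℝ), 0 < r →
      (∫⁻ x in ball c r, w x) ≤ C * essInf w (volume.restrict (ball c r)) * volume (ball c r))
    (c : En n) (r : ℝ) (hr : 0 < r)
    (htop : (∫⁻ x in ball c r, w x) = ⊤) : volume ({x | w x ≠ ⊤} ∩ ball c r) = 0 := by
  have hm : essInf w (volume.restrict (ball c r)) = ⊤ := by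
    by_contra hm
    have h := hap c r hr
    rw [htop] at h
    exact (ENNReal.mul_ne_top (ENNReal.mul_ne_top hC hm) measure_ball_lt_top.ne) (top_le_iff.1 h)
  have hae : ∀ᵐ x ∂(volume.restrict (ball c r)), w x = ⊤ := by
    filter_upwards [ae_essInf_le (f := w) (μ := volume.restrict (ball c r))] with x hx
    rw [hm] at hx
    exact top_le_iff.1 hx
  have h2 := ae_iff.1 hae
  rw [Measure.restrict_apply (by
    exact (hw (measurableSet_singleton ⊤)).compl)] at h2
  exact h2

lemma ae_top_gt {p : ℝ} (hp : 1 < p) (w : En n → ℝ≥0∞) (hw : Measurable w)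
    (C : ℝ≥0∞) (hC : C ≠ ⊤)
    (hap : ∀ (c : En n) (r : ℝ), 0 < r →
      (∫⁻ x in ball c r, w x) ^ (1 / p) *
          (∫⁻ x in ball c r, w x ^ (1 / (1 - p))) ^ (1 - 1 / p) ≤ C * volume (ball c r))
    (c : En n) (r : ℝ) (hr : 0 < r)
    (htop : (∫⁻ x in ball c r, w x) = ⊤) : volume ({x | w x ≠ ⊤} ∩ ball c r) = 0 := by
  have hp0 : (0:ℝ) < p := lt_trans one_pos hp
  have h1p : 1/p < 1 := by rw [div_lt_one hp0]; exact hp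
  have hJ : (∫⁻ x in ball c r, w x ^ (1/(1-p))) = 0 := by
    have h := hap c r hr
    rw [htop, ENNReal.top_rpow_of_pos (one_div_pos.2 hp0)] at h
    by_contra hJ
    have hJp : (∫⁻ x in ball c r, w x ^ (1/(1-p))) ^ (1-1/p) ≠ 0 := by
      rw [Ne, ENNReal.rpow_eq_zero_iff]
      push_neg
      exact ⟨fun h0 => absurd h0 hJ, fun _ => by linarith⟩
    rw [ENNReal.top_mul hJp] at h
    exact (ENNReal.mul_ne_top hC measure_ball_lt_top.ne) (top_le_iff.1 h)
  have hae := (lintegral_eq_zero_iff (hw.pow_const _)).1 hJ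
  have hae2 : ∀ᵐ x ∂(volume.restrict (ball c r)), w x = ⊤ := by
    filter_upwards [hae] with x hx
    rcases ENNReal.rpow_eq_zero_iff.1 hx with ⟨_, hpos⟩ | ⟨hT, _⟩
    · exact absurd hpos (not_lt.2 (le_of_lt (one_div_neg.2 (by linarith))))
    · exact hT
  have h2 := ae_iff.1 hae2
  rw [Measure.restrict_apply (by
    exact (hw (measurableSet_singleton ⊤)).compl)] at h2
  exact h2
/-- doubling-type constant -/
def Dn (n : ℕ) (p : ℝ) (C₁ : ℝ≥0∞) : ℝ≥0∞ := C₁ * ENNReal.ofReal ((3:ℝ) ^ n) ^ p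

def Kc (n : ℕ) (p lam₂ : ℝ) (Crd C₁ : ℝ≥0∞) : ℝ≥0∞ :=
  Dn n p C₁ ^ (lam₂ / (n:ℝ)) + (Crd * Dn n p C₁) ^ (((n:ℝ) - lam₂) / (n:ℝ))

lemma Dn_ne_top {p : ℝ} (hp : 0 ≤ p) {C₁ : ℝ≥0∞} (hC₁ : C₁ ≠ ⊤) : Dn n p C₁ ≠ ⊤ :=
  ENNReal.mul_ne_top hC₁ (ENNReal.rpow_ne_top_of_nonneg hp ENNReal.ofReal_ne_top)

lemma Kc_ne_top {p lam₂ : ℝ} (hp : 0 ≤ p) (h2 : 0 ≤ lam₂) (h2' : lam₂ ≤ (n:ℝ))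
    {Crd C₁ : ℝ≥0∞} (hCrd : Crd ≠ ⊤) (hC₁ : C₁ ≠ ⊤) : Kc n p lam₂ Crd C₁ ≠ ⊤ := by
  have h1 : (0:ℝ) ≤ lam₂ / n := by positivity
  have h2 : (0:ℝ) ≤ ((n:ℝ) - lam₂) / n := by
    apply div_nonneg (by linarith) (Nat.cast_nonneg n)
  exact ENNReal.add_ne_top.2
    ⟨ENNReal.rpow_ne_top_of_nonneg h1 (Dn_ne_top hp hC₁),
     ENNReal.rpow_ne_top_of_nonneg h2 (ENNReal.mul_ne_top hCrd (Dn_ne_top hp hC₁))⟩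

lemma M_bound (hn : 0 < n) {p lam₁ lam₂ : ℝ} (hp : 0 < p)
    (h1 : 0 ≤ lam₁) (h2 : 0 ≤ lam₂) (h2' : lam₂ < n)
    (w : En n → ℝ≥0∞) (Crd C₁ : ℝ≥0∞)
    (hfin : ∀ (c : En n) (r : ℝ), 0 < r → (∫⁻ x in ball c r, w x) ≠ ⊤)
    (hrd : ∀ (c₁ : En n) (r₁ : ℝ) (c₂ : En n) (r₂ : ℝ), 0 < r₁ → 0 < r₂ →
      ball c₁ r₁ ⊆ ball c₂ r₂ →
      (∫⁻ x in ball c₁ r₁, w x) ≤ Crd * (∫⁻ x in ball c₂ r₂, w x) *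
        (volume (ball c₁ r₁) / volume (ball c₂ r₂)) ^ (lam₁ / ((n : ℝ) - lam₂)))
    (hC₁ : ∀ (c : En n) (r : ℝ) (c' : En n) (r' : ℝ), 0 < r → 0 < r' →
      ball c' r' ⊆ ball c r →
      (∫⁻ x in ball c r, w x) ≤
        C₁ * (volume (ball c r) / volume (ball c' r')) ^ p * (∫⁻ x in ball c' r', w x))
    (c : En n) (r : ℝ) (hr : 0 < r) (hW0 : (∫⁻ x in ball c r, w x) ≠ 0) :
    morreyNorm n p (phiKS n lam₁ lam₂ w) w (chiB c r) ≤
      (Kc n p lam₂ Crd C₁ * (∫⁻ x in ball c r, w x) ^ (((n:ℝ) - lam₂) / (n:ℝ)) /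
        ENNReal.ofReal (r ^ lam₁)) ^ (1/p) := by
  have hn' : (0:ℝ) < n := Nat.cast_pos.2 hn
  set W := ∫⁻ x in ball c r, w x with hWdef
  set R := ENNReal.ofReal (r ^ lam₁) with hRdef
  set δ := ((n:ℝ) - lam₂) / (n:ℝ) with hδdef
  have hδ : 0 < δ := div_pos (by linarith) hn'
  have hl2n : (0:ℝ) ≤ lam₂ / n := by positivity
  have hδsum : δ + lam₂ / (n:ℝ) = 1 := by
    rw [hδdef, ← add_div, sub_add_cancel, div_self hn'.ne']
  have hR0 : R ≠ 0 := (ENNReal.ofReal_pos.2 (Real.rpow_pos_of_pos hr _)).ne'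
  have hRt : R ≠ ⊤ := ENNReal.ofReal_ne_top
  have hWt : W ≠ ⊤ := hfin c r hr
  have hDval : ∀ (c₀ : En n) (r₀ : ℝ), 0 < r₀ →
      (∫⁻ x in ball c₀ (3 * r₀), w x) ≤ Dn n p C₁ * (∫⁻ x in ball c₀ r₀, w x) := by
    intro c₀ r₀ hr₀
    have h := hC₁ c₀ (3 * r₀) c₀ r₀ (by linarith) hr₀ (ball_subset_ball (by linarith))
    rwa [vol_ratio hn c₀ c₀ (by linarith) hr₀,
      mul_div_assoc, div_self hr₀.ne', mul_one] at h
  refine iSup_le fun c' => iSup_le fun r' => iSup_le fun hr' => ?_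
  rw [chiB_num hp w c r c' r']
  refine ENNReal.rpow_le_rpow (ENNReal.div_le_of_le_mul ?_) (by positivity)
  -- goal : num ≤ (Kc * W^δ / R) * φ(c',r')
  set R' := ENNReal.ofReal (r' ^ lam₁) with hR'def
  set WB' := ∫⁻ x in ball c' r', w x with hWB'def
  set X := WB' ^ (lam₂ / (n:ℝ)) with hXdef
  have hφ : phiKS n lam₁ lam₂ w c' r' = R' * X := rfl
  rw [hφ]
  by_cases hint : (ball c r ∩ ball c' r').Nonempty
  swap
  · rw [not_nonempty_iff_eq_empty] at hint
    rw [hint, Measure.restrict_empty, lintegral_zero_measure]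
    exact zero_le
  rcases le_total r r' with hrr | hrr
  · -- case r ≤ r'
    have hsub : ball c r ⊆ ball c' (3 * r') := ball_sub3 hrr hint
    have hWD : W ≤ Dn n p C₁ * WB' := by
      calc W ≤ ∫⁻ x in ball c' (3 * r'), w x := lintegral_mono_set hsub
        _ ≤ Dn n p C₁ * WB' := hDval c' r' hr'
    have hRR' : R ≤ R' :=
      ENNReal.ofReal_le_ofReal (Real.rpow_le_rpow hr.le hrr h1)
    calc ∫⁻ x in ball c r ∩ ball c' r', w x
        ≤ W := lintegral_mono_set inter_subset_left
      _ = W ^ δ * W ^ (lam₂ / (n:ℝ)) := by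
          rw [← ENNReal.rpow_add _ _ hW0 hWt, hδsum, ENNReal.rpow_one]
      _ ≤ W ^ δ * (Dn n p C₁ * WB') ^ (lam₂ / (n:ℝ)) :=
          mul_le_mul' le_rfl (ENNReal.rpow_le_rpow hWD hl2n)
      _ = Dn n p C₁ ^ (lam₂ / (n:ℝ)) * (W ^ δ * X) := by
          rw [ENNReal.mul_rpow_of_nonneg _ _ hl2n, hXdef]; ring
      _ ≤ Kc n p lam₂ Crd C₁ * (W ^ δ * X) := mul_le_mul' le_self_add le_rfl
      _ = Kc n p lam₂ Crd C₁ * W ^ δ / R * (R * X) := by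
          rw [div_eq_mul_inv,
            show Kc n p lam₂ Crd C₁ * W ^ δ * R⁻¹ * (R * X) =
              (R⁻¹ * R) * (Kc n p lam₂ Crd C₁ * (W ^ δ * X)) from by ring,
            ENNReal.inv_mul_cancel hR0 hRt, one_mul]
      _ ≤ Kc n p lam₂ Crd C₁ * W ^ δ / R * (R' * X) :=
          mul_le_mul' le_rfl (mul_le_mul' hRR' le_rfl)
  · -- case r' ≤ r
    by_cases hWB'0 : WB' = 0
    · calc ∫⁻ x in ball c r ∩ ball c' r', w x
          ≤ WB' := lintegral_mono_set inter_subset_right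
        _ ≤ _ := by rw [hWB'0]; exact zero_le
    have hWB't : WB' ≠ ⊤ := hfin c' r' hr'
    have hsub2 : ball c' r' ⊆ ball c (3 * r) :=
      ball_sub3 hrr (by rwa [Set.inter_comm] at hint)
    have h3r : (0:ℝ) < 3 * r := by linarith
    set ρ := volume (ball c' r') / volume (ball c (3 * r)) with hρdef
    set α := lam₁ / ((n:ℝ) - lam₂) with hαdef
    have hαδ : α * δ = lam₁ / n := by
      rw [hαdef, hδdef]
      have hnl : (n:ℝ) - lam₂ ≠ 0 := by linarith
      field_simp
    have hx : (0:ℝ) < r' / (3 * r) := div_pos hr' h3r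
    have hρR : (ρ ^ α) ^ δ ≤ R' / R := by
      rw [← ENNReal.rpow_mul, hαδ, hρdef, vol_ratio hn c' c hr' h3r,
        ENNReal.ofReal_rpow_of_pos (pow_pos hx n)]
      have hxexp : ((r' / (3 * r)) ^ n) ^ (lam₁ / (n:ℝ)) = (r' / (3 * r)) ^ lam₁ := by
        rw [← Real.rpow_natCast (r' / (3 * r)) n, ← Real.rpow_mul hx.le]
        congr 1
        field_simp
      rw [hxexp, Real.div_rpow hr'.le h3r.le, hR'def, hRdef,
        ENNReal.ofReal_div_of_pos (Real.rpow_pos_of_pos h3r _)]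
      gcongr
      · linarith
    have hstep : WB' ≤ Crd * Dn n p C₁ * W * ρ ^ α := by
      have h := hrd c' r' c (3 * r) hr' h3r hsub2
      calc WB' ≤ Crd * (∫⁻ x in ball c (3 * r), w x) * ρ ^ α := h
        _ ≤ Crd * (Dn n p C₁ * W) * ρ ^ α :=
            mul_le_mul' (mul_le_mul' le_rfl (hDval c r hr)) le_rfl
        _ = Crd * Dn n p C₁ * W * ρ ^ α := by ring
    have hstepδ : WB' ^ δ ≤ (Crd * Dn n p C₁) ^ δ * W ^ δ * (R' / R) := by
      calc WB' ^ δ ≤ (Crd * Dn n p C₁ * W * ρ ^ α) ^ δ :=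
            ENNReal.rpow_le_rpow hstep hδ.le
        _ = (Crd * Dn n p C₁) ^ δ * W ^ δ * (ρ ^ α) ^ δ := by
            rw [ENNReal.mul_rpow_of_nonneg _ _ hδ.le, ENNReal.mul_rpow_of_nonneg _ _ hδ.le]
        _ ≤ (Crd * Dn n p C₁) ^ δ * W ^ δ * (R' / R) := mul_le_mul' le_rfl hρR
    calc ∫⁻ x in ball c r ∩ ball c' r', w x
        ≤ WB' := lintegral_mono_set inter_subset_right
      _ = WB' ^ δ * X := by
          rw [hXdef, ← ENNReal.rpow_add _ _ hWB'0 hWB't, hδsum, ENNReal.rpow_one]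
      _ ≤ (Crd * Dn n p C₁) ^ δ * W ^ δ * (R' / R) * X := mul_le_mul' hstepδ le_rfl
      _ ≤ Kc n p lam₂ Crd C₁ * W ^ δ / R * (R' * X) := by
          rw [div_eq_mul_inv, div_eq_mul_inv]
          calc (Crd * Dn n p C₁) ^ δ * W ^ δ * (R' * R⁻¹) * X
              ≤ Kc n p lam₂ Crd C₁ * W ^ δ * (R' * R⁻¹) * X := by
                gcongr
                exact le_add_self
            _ = Kc n p lam₂ Crd C₁ * W ^ δ * R⁻¹ * (R' * X) := by ring
lemma M_zero {p : ℝ} (hp : 0 < p) (φ : En n → ℝ → ℝ≥0∞) (w : En n → ℝ≥0∞) (c : En n) (r : ℝ)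
    (hW0 : (∫⁻ x in ball c r, w x) = 0) : morreyNorm n p φ w (chiB c r) = 0 := by
  refine le_antisymm (iSup_le fun c' => iSup_le fun r' => iSup_le fun hr' => ?_) (zero_le)
  rw [chiB_num hp w c r c' r']
  have h : ∫⁻ x in ball c r ∩ ball c' r', w x = 0 :=
    le_antisymm (hW0 ▸ lintegral_mono_set inter_subset_left) (zero_le)
  rw [h, ENNReal.zero_div, ENNReal.zero_rpow_of_pos (by positivity)]

lemma apConst_of_ae_top (hn : 0 < n) {p lam₁ lam₂ : ℝ} (hp : 0 < p)
    (h2 : 0 ≤ lam₂) (hsum0 : 0 < lam₁ + lam₂)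
    (w : En n → ℝ≥0∞) (hwtop : ∀ᵐ x, w x = ⊤) :
    apConst n p (phiKS n lam₁ lam₂ w) w = 0 := by
  have hn' : (0:ℝ) < n := Nat.cast_pos.2 hn
  have hWtop : ∀ (c : En n) (r : ℝ), 0 < r → (∫⁻ x in ball c r, w x) = ⊤ := by
    intro c r hr
    rw [setLIntegral_congr_fun_ae measurableSet_ball (hwtop.mono fun x hx _ => hx),
      setLIntegral_const, ENNReal.top_mul (measure_ball_pos volume c hr).ne']
  refine le_antisymm (iSup_le fun c => iSup_le fun r => iSup_le fun hr => ?_) (zero_le)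
  by_cases hl2 : lam₂ = 0
  · -- kotheNorm vanishes
    have hl1 : 0 < lam₁ := by rw [hl2, add_zero] at hsum0; exact hsum0
    have hφ : ∀ (c' : En n) (r' : ℝ), phiKS n lam₁ lam₂ w c' r' =
        ENNReal.ofReal (r' ^ lam₁) := by
      intro c' r'
      unfold phiKS
      rw [hl2, zero_div, ENNReal.rpow_zero, mul_one]
    have hK : kotheNorm n p (phiKS n lam₁ lam₂ w) w (chiB c r) ≤ 0 := by
      refine kothe_le hp _ w c r 0 fun g hgm hg0 hgcon => ?_
      have hgnull : volume {x | g x ≠ 0} = 0 := by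
        refine null_on_balls 0 fun m => ?_
        have hr'' : (0:ℝ) < 0 + m + 1 := by positivity
        have hTmeas : MeasurableSet ({x | g x ≠ 0} ∩ ball (0:En n) (0 + m + 1)) :=
          ((hgm (measurableSet_singleton 0)).compl).inter measurableSet_ball
        have heq : ∫⁻ x in ball (0:En n) (0 + m + 1), g x ^ p * w x =
            ∫⁻ x in ball (0:En n) (0 + m + 1), g x ^ p * ⊤ :=
          lintegral_congr_ae ((ae_restrict_of_ae hwtop).mono fun x hx => by
            show g x ^ p * w x = g x ^ p * ⊤
            rw [hx])
        have hbig : ⊤ * volume ({x | g x ≠ 0} ∩ ball (0:En n) (0 + m + 1)) ≤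
            ENNReal.ofReal ((0 + m + 1) ^ lam₁) := by
          calc ⊤ * volume ({x | g x ≠ 0} ∩ ball (0:En n) (0 + m + 1))
              = ∫⁻ _ in {x | g x ≠ 0} ∩ ball (0:En n) (0 + m + 1), (⊤:ℝ≥0∞) :=
                (setLIntegral_const _ _).symm
            _ = ∫⁻ x in {x | g x ≠ 0} ∩ ball (0:En n) (0 + m + 1), g x ^ p * ⊤ := by
                refine setLIntegral_congr_fun hTmeas (fun x hx => ?_)
                have hgp : g x ^ p ≠ 0 := by
                  intro h0
                  rcases ENNReal.rpow_eq_zero_iff.1 h0 with ⟨h0', _⟩ | ⟨_, hneg⟩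
                  · exact hx.1 h0'
                  · linarith
                exact (ENNReal.mul_top hgp).symm
            _ ≤ ∫⁻ x in ball (0:En n) (0 + m + 1), g x ^ p * ⊤ :=
                lintegral_mono_set inter_subset_right
            _ = ∫⁻ x in ball (0:En n) (0 + m + 1), g x ^ p * w x := heq.symm
            _ ≤ phiKS n lam₁ lam₂ w 0 (0 + m + 1) := hgcon 0 (0 + m + 1) hr''
            _ = ENNReal.ofReal ((0 + m + 1) ^ lam₁) := hφ 0 (0 + m + 1)
        by_contra hne
        rw [ENNReal.top_mul hne] at hbig
        exact ENNReal.ofReal_ne_top (top_le_iff.1 hbig)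
      have hg0ae : ∀ᵐ x, g x = 0 := by
        rw [ae_iff]
        simpa using hgnull
      calc ∫⁻ x in ball c r, g x ≤ ∫⁻ x, g x := setLIntegral_le_lintegral _ _
        _ = ∫⁻ _, (0:ℝ≥0∞) := lintegral_congr_ae hg0ae
        _ = 0 := lintegral_zero
    calc morreyNorm n p (phiKS n lam₁ lam₂ w) w (chiB c r) *
          kotheNorm n p (phiKS n lam₁ lam₂ w) w (chiB c r) / volume (ball c r)
        ≤ morreyNorm n p (phiKS n lam₁ lam₂ w) w (chiB c r) * 0 / volume (ball c r) := by
          gcongr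
      _ = 0 := by rw [mul_zero, ENNReal.zero_div]
  · have hl2' : 0 < lam₂ := lt_of_le_of_ne h2 (Ne.symm hl2)
    have hφtop : ∀ (c' : En n) (r' : ℝ), 0 < r' → phiKS n lam₁ lam₂ w c' r' = ⊤ := by
      intro c' r' hr'
      unfold phiKS
      rw [hWtop c' r' hr', ENNReal.top_rpow_of_pos (div_pos hl2' hn'),
        ENNReal.mul_top (ENNReal.ofReal_pos.2 (Real.rpow_pos_of_pos hr' _)).ne']
    have hM : morreyNorm n p (phiKS n lam₁ lam₂ w) w (chiB c r) ≤ 0 := by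
      refine iSup_le fun c' => iSup_le fun r' => iSup_le fun hr' => ?_
      rw [hφtop c' r' hr', ENNReal.div_top, ENNReal.zero_rpow_of_pos (by positivity)]
    calc morreyNorm n p (phiKS n lam₁ lam₂ w) w (chiB c r) *
          kotheNorm n p (phiKS n lam₁ lam₂ w) w (chiB c r) / volume (ball c r)
        ≤ 0 * kotheNorm n p (phiKS n lam₁ lam₂ w) w (chiB c r) / volume (ball c r) := by
          gcongr
      _ = 0 := by rw [zero_mul, ENNReal.zero_div]
end Stmt18
namespace Stmt18

lemma arith_one {K W R mm V C : ℝ≥0∞} (hR0 : R ≠ 0) (hRt : R ≠ ⊤) (hm0 : mm ≠ 0) (hmt : mm ≠ ⊤)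
    (hV0 : V ≠ 0) (hVt : V ≠ ⊤) {A B : ℝ≥0∞} (hAB : A * B = W) (hW : W ≤ C * mm * V) :
    (K * A / R) * (R * B / mm) / V ≤ K * C := by
  rw [div_eq_mul_inv, div_eq_mul_inv, div_eq_mul_inv,
    show K * A * R⁻¹ * (R * B * mm⁻¹) * V⁻¹ = (R⁻¹ * R) * (K * (A * B) * mm⁻¹ * V⁻¹) from by ring,
    ENNReal.inv_mul_cancel hR0 hRt, one_mul, hAB]
  calc K * W * mm⁻¹ * V⁻¹ ≤ K * (C * mm * V) * mm⁻¹ * V⁻¹ := by gcongr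
    _ = (K * C) * (mm * mm⁻¹) * (V * V⁻¹) := by ring
    _ = K * C := by
        rw [ENNReal.mul_inv_cancel hm0 hmt, ENNReal.mul_inv_cancel hV0 hVt, mul_one, mul_one]

lemma arith_gt {p : ℝ} (hp0 : 0 < p) {K A B W R J V C : ℝ≥0∞} (hR0 : R ≠ 0) (hRt : R ≠ ⊤)
    (hV0 : V ≠ 0) (hVt : V ≠ ⊤) (hAB : A * B = W)
    (hW : W ^ (1/p) * J ≤ C * V) :
    (K * A / R) ^ (1/p) * ((R * B) ^ (1/p) * J) / V ≤ K ^ (1/p) * C := by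
  have hcomb : (K * A / R) ^ (1/p) * (R * B) ^ (1/p) = K ^ (1/p) * W ^ (1/p) := by
    rw [← ENNReal.mul_rpow_of_nonneg _ _ (by positivity : (0:ℝ) ≤ 1/p),
      div_eq_mul_inv,
      show K * A * R⁻¹ * (R * B) = (R⁻¹ * R) * (K * (A * B)) from by ring,
      ENNReal.inv_mul_cancel hR0 hRt, one_mul, hAB,
      ENNReal.mul_rpow_of_nonneg _ _ (by positivity : (0:ℝ) ≤ 1/p)]
  calc (K * A / R) ^ (1/p) * ((R * B) ^ (1/p) * J) / V
      = (K ^ (1/p) * (W ^ (1/p) * J)) / V := by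
        rw [← mul_assoc, hcomb, mul_assoc]
    _ ≤ (K ^ (1/p) * (C * V)) / V := by gcongr
    _ = K ^ (1/p) * C * (V * V⁻¹) := by rw [div_eq_mul_inv]; ring
    _ = K ^ (1/p) * C := by rw [ENNReal.mul_inv_cancel hV0 hVt, mul_one]

end Stmt18

/-- if `w ∈ A_p` (Muckenhoupt: the `p = 1` and `p > 1` cases stated
separately) and `w` is reverse doubling with exponent `λ₁/(n-λ₂)`, then
`w ∈ A(M^p(φ))` with `φ(B) = r_B^{λ₁} w(B)^{λ₂/n}`, i.e. the Muckenhoupt–Morrey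
constant is finite. -/
theorem stmt18 {n : ℕ} (hn : 0 < n) (p lam₁ lam₂ : ℝ) (hp : 1 ≤ p)
    (h1 : 0 ≤ lam₁) (h1' : lam₁ < n) (h2 : 0 ≤ lam₂) (h2' : lam₂ < n)
    (hsum0 : 0 < lam₁ + lam₂) (hsum : lam₁ + lam₂ < n)
    (w : En n → ℝ≥0∞) (hw : Measurable w)
    (hAp : (p = 1 ∧ ∃ C : ℝ≥0∞, C ≠ ⊤ ∧ ∀ (c : En n) (r : ℝ), 0 < r →
        (∫⁻ x in ball c r, w x)
          ≤ C * essInf w (volume.restrict (ball c r)) * volume (ball c r))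
      ∨ (1 < p ∧ ∃ C : ℝ≥0∞, C ≠ ⊤ ∧ ∀ (c : En n) (r : ℝ), 0 < r →
        (∫⁻ x in ball c r, w x) ^ (1 / p) *
            (∫⁻ x in ball c r, w x ^ (1 / (1 - p))) ^ (1 - 1 / p)
          ≤ C * volume (ball c r)))
    (Crd : ℝ≥0∞) (hCrd : Crd ≠ ⊤)
    (hrd : ∀ (c₁ : En n) (r₁ : ℝ) (c₂ : En n) (r₂ : ℝ), 0 < r₁ → 0 < r₂ →
      ball c₁ r₁ ⊆ ball c₂ r₂ →
      (∫⁻ x in ball c₁ r₁, w x) ≤ Crd * (∫⁻ x in ball c₂ r₂, w x) *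
        (volume (ball c₁ r₁) / volume (ball c₂ r₂)) ^ (lam₁ / ((n : ℝ) - lam₂))) :
    apConst n p (phiKS n lam₁ lam₂ w) w ≠ ⊤ := by
  classical
  have hn' : (0:ℝ) < n := Nat.cast_pos.2 hn
  have hp0 : (0:ℝ) < p := lt_of_lt_of_le one_pos hp
  by_cases hfin : ∀ (c : En n) (r : ℝ), 0 < r → (∫⁻ x in ball c r, w x) ≠ ⊤
  swap
  · -- some ball has infinite weighted measure: then w = ⊤ a.e. and apConst = 0
    push_neg at hfin
    obtain ⟨c₀, r₀, hr₀, htop₀⟩ := hfin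
    have hnorm0 : (0:ℝ) ≤ ‖c₀‖ := norm_nonneg _
    have hwtop : ∀ᵐ x, w x = ⊤ := by
      have hball : volume {x | w x ≠ ⊤} = 0 := by
        refine Stmt18.null_on_balls (‖c₀‖ + r₀) fun m => ?_
        have hm0 : (0:ℝ) ≤ m := Nat.cast_nonneg m
        have hR₂ : (0:ℝ) < ‖c₀‖ + r₀ + m + 1 := by linarith
        have hsub : ball c₀ r₀ ⊆ ball (0:En n) (‖c₀‖ + r₀ + m + 1) := by
          intro y hy
          rw [mem_ball]
          calc dist y 0 ≤ dist y c₀ + dist c₀ 0 := dist_triangle _ _ _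
            _ < ‖c₀‖ + r₀ + m + 1 := by
                rw [dist_zero_right]
                have := mem_ball.1 hy
                linarith
        have htop₂ : (∫⁻ x in ball (0:En n) (‖c₀‖ + r₀ + m + 1), w x) = ⊤ := by
          have h := hrd c₀ r₀ 0 (‖c₀‖ + r₀ + m + 1) hr₀ hR₂ hsub
          rw [htop₀] at h
          have hle1 : (volume (ball c₀ r₀) / volume (ball (0:En n) (‖c₀‖ + r₀ + m + 1))) ^
              (lam₁ / ((n:ℝ) - lam₂)) ≤ 1 :=
            ENNReal.rpow_le_one (ENNReal.div_le_of_le_mul (by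
              rw [one_mul]; exact measure_mono hsub)) (div_nonneg h1 (by linarith))
          have h2'' : (⊤:ℝ≥0∞) ≤ Crd * (∫⁻ x in ball (0:En n) (‖c₀‖ + r₀ + m + 1), w x) := by
            calc (⊤:ℝ≥0∞) ≤ _ := h
              _ ≤ Crd * (∫⁻ x in ball (0:En n) (‖c₀‖ + r₀ + m + 1), w x) * 1 :=
                  mul_le_mul' le_rfl hle1
              _ = _ := mul_one _
          by_contra hne
          exact (ENNReal.mul_ne_top hCrd hne) (top_le_iff.1 h2'')
        rcases hAp with ⟨hp1, C, hC, hap⟩ | ⟨hp1, C, hC, hap⟩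
        · exact Stmt18.ae_top_one w hw C hC hap 0 _ hR₂ htop₂
        · exact Stmt18.ae_top_gt hp1 w hw C hC hap 0 _ hR₂ htop₂
      rw [ae_iff]
      simpa using hball
    rw [Stmt18.apConst_of_ae_top hn hp0 h2 hsum0 w hwtop]
    exact ENNReal.zero_ne_top
  · rcases hAp with ⟨hp1, C, hC, hap⟩ | ⟨hp1, C, hC, hap⟩
    · -- p = 1
      subst hp1
      have hC₁ : ∀ (c : En n) (r : ℝ) (c' : En n) (r' : ℝ), 0 < r → 0 < r' →
          ball c' r' ⊆ ball c r →
          (∫⁻ x in ball c r, w x) ≤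
            C * (volume (ball c r) / volume (ball c' r')) ^ (1:ℝ) *
              (∫⁻ x in ball c' r', w x) :=
        fun c r c' r' hr hr' hsub => Stmt18.L1_one w C hap c r c' r' hr hr' hsub
      have hKct : Stmt18.Kc n 1 lam₂ Crd C ≠ ⊤ :=
        Stmt18.Kc_ne_top one_pos.le h2 h2'.le hCrd hC
      refine ne_top_of_le_ne_top (ENNReal.mul_ne_top hKct hC) ?_
      refine iSup_le fun c => iSup_le fun r => iSup_le fun hr => ?_
      by_cases hW0 : (∫⁻ x in ball c r, w x) = 0
      · rw [Stmt18.M_zero one_pos _ w c r hW0, zero_mul, ENNReal.zero_div]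
        exact zero_le
      · have hV0 : volume (ball c r) ≠ 0 := (measure_ball_pos volume c hr).ne'
        have hVt : volume (ball c r) ≠ ⊤ := measure_ball_lt_top.ne
        have hWt : (∫⁻ x in ball c r, w x) ≠ ⊤ := hfin c r hr
        have hm0 : essInf w (volume.restrict (ball c r)) ≠ 0 := by
          intro hm
          apply hW0
          have h := hap c r hr
          rw [hm, mul_zero, zero_mul] at h
          exact le_antisymm h (zero_le)
        have hmt : essInf w (volume.restrict (ball c r)) ≠ ⊤ := by
          intro hm
          apply hWt
          have hae : ∀ᵐ x ∂(volume.restrict (ball c r)), w x = ⊤ := by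
            filter_upwards [ae_essInf_le (f := w) (μ := volume.restrict (ball c r))] with x hx
            rw [hm] at hx
            exact top_le_iff.1 hx
          rw [lintegral_congr_ae (hae.mono fun x hx => by rw [hx]),
            setLIntegral_const, ENNReal.top_mul hV0]
        have hR0 : ENNReal.ofReal (r ^ lam₁) ≠ 0 :=
          (ENNReal.ofReal_pos.2 (Real.rpow_pos_of_pos hr _)).ne'
        have hRt : ENNReal.ofReal (r ^ lam₁) ≠ ⊤ := ENNReal.ofReal_ne_top
        have hδsum : ((n:ℝ) - lam₂) / (n:ℝ) + lam₂ / (n:ℝ) = 1 := by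
          rw [← add_div, sub_add_cancel, div_self hn'.ne']
        have hWsplit : (∫⁻ x in ball c r, w x) ^ (((n:ℝ) - lam₂) / (n:ℝ)) *
            (∫⁻ x in ball c r, w x) ^ (lam₂ / (n:ℝ)) = ∫⁻ x in ball c r, w x := by
          rw [← ENNReal.rpow_add _ _ hW0 hWt, hδsum, ENNReal.rpow_one]
        have hM := Stmt18.M_bound hn one_pos h1 h2 h2' w Crd C hfin hrd hC₁ c r hr hW0
        have hK := Stmt18.K_bound_one (lam₁ := lam₁) (lam₂ := lam₂) w c r hr hm0 hmt
        have hφr : phiKS n lam₁ lam₂ w c r =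
            ENNReal.ofReal (r ^ lam₁) * (∫⁻ x in ball c r, w x) ^ (lam₂ / (n:ℝ)) := rfl
        calc morreyNorm n 1 (phiKS n lam₁ lam₂ w) w (chiB c r) *
              kotheNorm n 1 (phiKS n lam₁ lam₂ w) w (chiB c r) / volume (ball c r)
            ≤ (Stmt18.Kc n 1 lam₂ Crd C *
                  (∫⁻ x in ball c r, w x) ^ (((n:ℝ) - lam₂) / (n:ℝ)) /
                  ENNReal.ofReal (r ^ lam₁)) ^ ((1:ℝ)/1) *
                (phiKS n lam₁ lam₂ w c r / essInf w (volume.restrict (ball c r))) /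
                volume (ball c r) := by
              gcongr
          _ = (Stmt18.Kc n 1 lam₂ Crd C *
                  (∫⁻ x in ball c r, w x) ^ (((n:ℝ) - lam₂) / (n:ℝ)) /
                  ENNReal.ofReal (r ^ lam₁)) *
                (ENNReal.ofReal (r ^ lam₁) * (∫⁻ x in ball c r, w x) ^ (lam₂ / (n:ℝ)) /
                  essInf w (volume.restrict (ball c r))) / volume (ball c r) := by
              rw [hφr, show (1:ℝ)/1 = 1 from by norm_num, ENNReal.rpow_one]
          _ ≤ Stmt18.Kc n 1 lam₂ Crd C * C :=
              Stmt18.arith_one hR0 hRt hm0 hmt hV0 hVt hWsplit (hap c r hr)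
    · -- p > 1
      have hC₁ : ∀ (c : En n) (r : ℝ) (c' : En n) (r' : ℝ), 0 < r → 0 < r' →
          ball c' r' ⊆ ball c r →
          (∫⁻ x in ball c r, w x) ≤
            C ^ p * (volume (ball c r) / volume (ball c' r')) ^ p *
              (∫⁻ x in ball c' r', w x) :=
        fun c r c' r' hr hr' hsub =>
          Stmt18.L1_gt hp1 w hw C hC hap c r c' r' hr hr' hsub (hfin c r hr)
      have hCpt : C ^ p ≠ ⊤ := ENNReal.rpow_ne_top_of_nonneg hp0.le hC
      have hKct : Stmt18.Kc n p lam₂ Crd (C ^ p) ≠ ⊤ :=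
        Stmt18.Kc_ne_top hp0.le h2 h2'.le hCrd hCpt
      refine ne_top_of_le_ne_top
        (show Stmt18.Kc n p lam₂ Crd (C ^ p) ^ (1/p) * C ≠ ⊤ from ENNReal.mul_ne_top
          (ENNReal.rpow_ne_top_of_nonneg (by positivity) hKct) hC) ?_
      refine iSup_le fun c => iSup_le fun r => iSup_le fun hr => ?_
      by_cases hW0 : (∫⁻ x in ball c r, w x) = 0
      · rw [Stmt18.M_zero hp0 _ w c r hW0, zero_mul, ENNReal.zero_div]
        exact zero_le
      · have hV0 : volume (ball c r) ≠ 0 := (measure_ball_pos volume c hr).ne'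
        have hVt : volume (ball c r) ≠ ⊤ := measure_ball_lt_top.ne
        have hWt : (∫⁻ x in ball c r, w x) ≠ ⊤ := hfin c r hr
        have hR0 : ENNReal.ofReal (r ^ lam₁) ≠ 0 :=
          (ENNReal.ofReal_pos.2 (Real.rpow_pos_of_pos hr _)).ne'
        have hRt : ENNReal.ofReal (r ^ lam₁) ≠ ⊤ := ENNReal.ofReal_ne_top
        have hδsum : ((n:ℝ) - lam₂) / (n:ℝ) + lam₂ / (n:ℝ) = 1 := by
          rw [← add_div, sub_add_cancel, div_self hn'.ne']
        have hWsplit : (∫⁻ x in ball c r, w x) ^ (((n:ℝ) - lam₂) / (n:ℝ)) *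
            (∫⁻ x in ball c r, w x) ^ (lam₂ / (n:ℝ)) = ∫⁻ x in ball c r, w x := by
          rw [← ENNReal.rpow_add _ _ hW0 hWt, hδsum, ENNReal.rpow_one]
        have h1p : 1/p < 1 := by rw [div_lt_one hp0]; exact hp1
        have hJt : (∫⁻ x in ball c r, w x ^ (1/(1-p))) ≠ ⊤ := by
          intro hJ
          have h := hap c r hr
          rw [hJ, ENNReal.top_rpow_of_pos (by linarith : (0:ℝ) < 1 - 1/p)] at h
          have hWp : (∫⁻ x in ball c r, w x) ^ (1/p) ≠ 0 := by
            rw [Ne, ENNReal.rpow_eq_zero_iff]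
            push_neg
            exact ⟨fun h0 => absurd h0 hW0, fun _ => one_div_nonneg.2 hp0.le⟩
          rw [ENNReal.mul_top hWp] at h
          exact (ENNReal.mul_ne_top hC measure_ball_lt_top.ne) (top_le_iff.1 h)
        have hM := Stmt18.M_bound hn hp0 h1 h2 h2' w Crd (C ^ p) hfin hrd hC₁ c r hr hW0
        have hK := Stmt18.K_bound_gt (lam₁ := lam₁) (lam₂ := lam₂) hp1 w hw c r hr hWt hJt
        have hφr : phiKS n lam₁ lam₂ w c r =
            ENNReal.ofReal (r ^ lam₁) * (∫⁻ x in ball c r, w x) ^ (lam₂ / (n:ℝ)) := rfl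
        calc morreyNorm n p (phiKS n lam₁ lam₂ w) w (chiB c r) *
              kotheNorm n p (phiKS n lam₁ lam₂ w) w (chiB c r) / volume (ball c r)
            ≤ (Stmt18.Kc n p lam₂ Crd (C ^ p) *
                  (∫⁻ x in ball c r, w x) ^ (((n:ℝ) - lam₂) / (n:ℝ)) /
                  ENNReal.ofReal (r ^ lam₁)) ^ (1/p) *
                ((phiKS n lam₁ lam₂ w c r) ^ (1/p) *
                  (∫⁻ x in ball c r, w x ^ (1/(1-p))) ^ (1 - 1/p)) /
                volume (ball c r) := by
              gcongr
          _ = (Stmt18.Kc n p lam₂ Crd (C ^ p) *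
                  (∫⁻ x in ball c r, w x) ^ (((n:ℝ) - lam₂) / (n:ℝ)) /
                  ENNReal.ofReal (r ^ lam₁)) ^ (1/p) *
                ((ENNReal.ofReal (r ^ lam₁) *
                    (∫⁻ x in ball c r, w x) ^ (lam₂ / (n:ℝ))) ^ (1/p) *
                  (∫⁻ x in ball c r, w x ^ (1/(1-p))) ^ (1 - 1/p)) /
                volume (ball c r) := by rw [hφr]
          _ ≤ Stmt18.Kc n p lam₂ Crd (C ^ p) ^ (1/p) * C :=
              Stmt18.arith_gt hp0 hR0 hRt hV0 hVt hWsplit (hap c r hr)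
end
end
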